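/- arXiv:1106.6099 — 7 statements merged into one kernel-verified Lean document; each statement's English description precedes it below -/
import Mathlib

section
/- If H = (X, C, D) is a mixed hypergraph whose feasible set contains s, does not contain t-1, and contains some element ≥ t (i.e., H is s-colorable with a gap at t-1), then |X| ≥ 2t - s. -/
/-- A mixed hypergraph on vertex type `V`: families of C-edges and D-edges. -/
structure MixedHypergraph (V : Type*) where
  Cedges : Set (Set V)
  Dedges : Set (Set V)

/-- A strict `k`-coloring: a surjective coloring with `k` colors such that every
C-edge has two distinct vertices with a common color and every D-edge has two
distinct vertices with distinct colors. -/
def IsStrictColoring {V : Type*} (H : MixedHypergraph V) (k : ℕ) (f : V → Fin k) : Prop :=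
  Function.Surjective f ∧
  (∀ e ∈ H.Cedges, ∃ u ∈ e, ∃ v ∈ e, u ≠ v ∧ f u = f v) ∧
  (∀ e ∈ H.Dedges, ∃ u ∈ e, ∃ v ∈ e, u ≠ v ∧ f u ≠ f v)

/-- The feasible set of a mixed hypergraph. -/
def FeasibleSet {V : Type*} (H : MixedHypergraph V) : Set ℕ :=
  {k | ∃ f : V → Fin k, IsStrictColoring H k f}

/-- Two colorings induce the same partition of the vertex set. -/
def SamePartition {V : Type*} {k k' : ℕ} (f : V → Fin k) (g : V → Fin k') : Prop :=
  ∀ u v, f u = f v ↔ g u = g v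

/-- `H` is a one-realization of `S`: its feasible set is `S` and for each `k`
the partition induced by a strict `k`-coloring is unique. -/
def IsOneRealization {V : Type*} (H : MixedHypergraph V) (S : Set ℕ) : Prop :=
  FeasibleSet H = S ∧
  ∀ (k : ℕ) (f g : V → Fin k), IsStrictColoring H k f → IsStrictColoring H k g →
    SamePartition f g

/- ### Auxiliary material -/

/-- The map `Fin (n+1) → Fin n` that merges colors `i` and `j` (and renames). -/
def mergeFun {n : ℕ} (i j : Fin (n + 1)) (hij : i ≠ j) (x : Fin (n + 1)) : Fin n :=
  let σ := Equiv.swap j (Fin.last n)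
  if h : σ x = Fin.last n then
    (σ i).castPred (by
      intro hi
      exact hij (σ.injective (hi.trans (Equiv.swap_apply_left j (Fin.last n)).symm)))
  else (σ x).castPred h

lemma mergeFun_surjective {n : ℕ} (i j : Fin (n + 1)) (hij : i ≠ j) :
    Function.Surjective (mergeFun i j hij) := by
  intro y
  refine ⟨(Equiv.swap j (Fin.last n)).symm y.castSucc, ?_⟩
  have hne : (y.castSucc : Fin (n + 1)) ≠ Fin.last n := (Fin.castSucc_lt_last y).ne
  simp [mergeFun, hne]

lemma mergeFun_eq_cases {n : ℕ} (i j : Fin (n + 1)) (hij : i ≠ j) (a b : Fin (n + 1))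
    (h : mergeFun i j hij a = mergeFun i j hij b) :
    a = b ∨ (a = i ∧ b = j) ∨ (a = j ∧ b = i) := by
  classical
  have hσj : Equiv.swap j (Fin.last n) j = Fin.last n := Equiv.swap_apply_left j (Fin.last n)
  have heqj : ∀ x : Fin (n + 1), Equiv.swap j (Fin.last n) x = Fin.last n → x = j := by
    intro x hx
    exact (Equiv.swap j (Fin.last n)).injective (hx.trans hσj.symm)
  by_cases ha : Equiv.swap j (Fin.last n) a = Fin.last n <;>
    by_cases hb : Equiv.swap j (Fin.last n) b = Fin.last n
  · left; exact ((heqj a ha).trans (heqj b hb).symm)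
  · have hab : Equiv.swap j (Fin.last n) i = Equiv.swap j (Fin.last n) b := by
      have h' := h
      simp only [mergeFun, dif_pos ha, dif_neg hb] at h'
      exact Fin.castPred_inj.mp h'
    right; right
    exact ⟨heqj a ha, ((Equiv.swap j (Fin.last n)).injective hab).symm⟩
  · have hab : Equiv.swap j (Fin.last n) a = Equiv.swap j (Fin.last n) i := by
      have h' := h
      simp only [mergeFun, dif_neg ha, dif_pos hb] at h'
      exact Fin.castPred_inj.mp h'
    right; left
    exact ⟨(Equiv.swap j (Fin.last n)).injective hab, heqj b hb⟩
  · have hab : Equiv.swap j (Fin.last n) a = Equiv.swap j (Fin.last n) b := by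
      have h' := h
      simp only [mergeFun, dif_neg ha, dif_neg hb] at h'
      exact Fin.castPred_inj.mp h'
    left; exact (Equiv.swap j (Fin.last n)).injective hab

/-- A pair of colors `i ≠ j` is *bad* if merging them would kill some D-edge. -/
def BadFor {V : Type*} (H : MixedHypergraph V) {p : ℕ} (P : V → Fin p) (i j : Fin p) : Prop :=
  ∃ e ∈ H.Dedges, (∀ v ∈ e, P v = i ∨ P v = j) ∧ (∃ u ∈ e, P u = i) ∧ (∃ v ∈ e, P v = j)

/-- A coloring is *stuck* if every pair of colors is bad. -/
def Stuck {V : Type*} (H : MixedHypergraph V) {p : ℕ} (P : V → Fin p) : Prop :=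
  ∀ i j : Fin p, i ≠ j → BadFor H P i j

lemma exists_stuck {V : Type*} (H : MixedHypergraph V) (t : ℕ)
    (hgap : t - 1 ∉ FeasibleSet H) :
    ∀ k, t ≤ k → k ∈ FeasibleSet H →
      ∃ p, t ≤ p ∧ ∃ P : V → Fin p, IsStrictColoring H p P ∧ Stuck H P := by
  intro k
  induction k using Nat.strong_induction_on with
  | _ k ih =>
    intro htk hk
    obtain ⟨c, hstrict⟩ := hk
    obtain ⟨hsurj, hC, hD⟩ := hstrict
    by_cases hst : Stuck H c
    · exact ⟨k, htk, c, ⟨hsurj, hC, hD⟩, hst⟩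
    · rw [Stuck] at hst
      push_neg at hst
      obtain ⟨i, j, hij, hnb⟩ := hst
      obtain ⟨n, rfl⟩ : ∃ n, k = n + 1 := ⟨k - 1, by omega⟩
      set μ := mergeFun i j hij with hμ
      -- the merged coloring is strict
      have hstrict' : IsStrictColoring H n (μ ∘ c) := by
        refine ⟨(mergeFun_surjective i j hij).comp hsurj, ?_, ?_⟩
        · intro e he
          obtain ⟨u, hu, v, hv, huv, hcv⟩ := hC e he
          exact ⟨u, hu, v, hv, huv, congrArg μ hcv⟩
        · intro e he
          by_contra hcon
          push_neg at hcon
          -- every pair in e gets equal μ∘c values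
          have hall : ∀ u ∈ e, ∀ v ∈ e, u ≠ v → μ (c u) = μ (c v) := by
            intro u hu v hv huv
            by_contra hne
            exact hne (by
              rcases hcon u hu v hv with h'
              exact h' huv)
          obtain ⟨u, hu, v, hv, huv, hcv⟩ := hD e he
          have hkey := mergeFun_eq_cases i j hij (c u) (c v) (hall u hu v hv huv)
          have huvij : (c u = i ∧ c v = j) ∨ (c u = j ∧ c v = i) := by
            rcases hkey with h' | h' | h'
            · exact absurd h' hcv
            · exact Or.inl h'
            · exact Or.inr h'
          have hmem : ∀ w ∈ e, c w = i ∨ c w = j := by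
            intro w hw
            have hw' : w = u ∨ w = v ∨ (w ≠ u ∧ w ≠ v) := by tauto
            rcases hw' with rfl | rfl | ⟨hwu, hwv⟩
            · rcases huvij with ⟨h1, _⟩ | ⟨h1, _⟩
              · exact Or.inl h1
              · exact Or.inr h1
            · rcases huvij with ⟨_, h2⟩ | ⟨_, h2⟩
              · exact Or.inr h2
              · exact Or.inl h2
            · have := mergeFun_eq_cases i j hij (c w) (c u) (hall w hw u hu hwu)
              rcases this with h' | ⟨h', _⟩ | ⟨h', _⟩
              · rw [h']
                rcases huvij with ⟨h1, _⟩ | ⟨h1, _⟩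
                · exact Or.inl h1
                · exact Or.inr h1
              · exact Or.inl h'
              · exact Or.inr h'
          refine hnb ⟨e, he, hmem, ?_, ?_⟩
          · rcases huvij with ⟨h1, _⟩ | ⟨_, h2⟩
            · exact ⟨u, hu, h1⟩
            · exact ⟨v, hv, h2⟩
          · rcases huvij with ⟨_, h2⟩ | ⟨h1, _⟩
            · exact ⟨v, hv, h2⟩
            · exact ⟨u, hu, h1⟩
      have hn : n ∈ FeasibleSet H := ⟨μ ∘ c, hstrict'⟩
      by_cases htn : t ≤ n
      · exact ih n (by omega) htn hn
      · exfalso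
        have : n = t - 1 := by omega
        exact hgap (this ▸ hn)

/-- if the feasible set of `H` contains `s`, omits `t-1`, and contains
some element `≥ t` (i.e. `H` is `s`-colorable with a gap at `t-1`), then `|X| ≥ 2t - s`. -/
theorem card_ge_of_gap {V : Type*} [Fintype V] (H : MixedHypergraph V) (s t : ℕ)
    (hs : s ∈ FeasibleSet H) (hgap : t - 1 ∉ FeasibleSet H)
    (hbig : ∃ m ∈ FeasibleSet H, t ≤ m) :
    2 * t - s ≤ Fintype.card V := by
  classical
  obtain ⟨m, hm, htm⟩ := hbig
  obtain ⟨p, htp, P, ⟨hPsurj, hPC, hPD⟩, hstuck⟩ := exists_stuck H t hgap m htm hm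
  obtain ⟨f, hfsurj, hfC, hfD⟩ := hs
  -- fibers of P
  set fib : Fin p → Finset V := fun i => Finset.univ.filter (fun v => P v = i) with hfib
  have hfibmem : ∀ i v, v ∈ fib i ↔ P v = i := by
    intro i v; simp [hfib]
  have hfibpos : ∀ i, 1 ≤ (fib i).card := by
    intro i
    obtain ⟨v, hv⟩ := hPsurj i
    exact Finset.card_pos.mpr ⟨v, (hfibmem i v).mpr hv⟩
  have hcard : Fintype.card V = ∑ i : Fin p, (fib i).card := by
    rw [Fintype.card, Finset.card_eq_sum_card_fiberwise (f := P) (t := Finset.univ)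
      (fun v _ => Finset.mem_univ _)]
  set T : Finset (Fin p) := Finset.univ.filter (fun i => 2 ≤ (fib i).card) with hT
  -- Step A : p + T.card ≤ card V
  have hA : p + T.card ≤ Fintype.card V := by
    rw [hcard]
    have : ∑ i : Fin p, ((1 : ℕ) + if i ∈ T then 1 else 0) ≤ ∑ i : Fin p, (fib i).card := by
      refine Finset.sum_le_sum ?_
      intro i _
      by_cases hi : i ∈ T
      · simp only [hi, if_pos]
        have : 2 ≤ (fib i).card := (Finset.mem_filter.mp hi).2
        omega
      · simp only [hi, if_neg, not_false_iff]
        have := hfibpos i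
        omega
    calc p + T.card = ∑ i : Fin p, ((1 : ℕ) + if i ∈ T then 1 else 0) := by
          rw [Finset.sum_add_distrib]
          simp [Finset.sum_ite_mem, hT]
      _ ≤ _ := this
  -- Step B : t ≤ T.card + s
  have hB : t ≤ T.card + s := by
    by_contra hcon
    push_neg at hcon
    -- singleton classes
    set S : Finset (Fin p) := Finset.univ.filter (fun i => (fib i).card = 1) with hS
    have hScompl : ∀ i : Fin p, i ∈ S ∨ i ∈ T := by
      intro i
      have h1 := hfibpos i
      by_cases h2 : 2 ≤ (fib i).card
      · exact Or.inr (Finset.mem_filter.mpr ⟨Finset.mem_univ _, h2⟩)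
      · exact Or.inl (Finset.mem_filter.mpr ⟨Finset.mem_univ _, by omega⟩)
    have hScard : s < S.card := by
      have hpST : p ≤ S.card + T.card := by
        have : (Finset.univ : Finset (Fin p)) ⊆ S ∪ T := by
          intro i _
          rcases hScompl i with h | h
          · exact Finset.mem_union_left _ h
          · exact Finset.mem_union_right _ h
        calc p = (Finset.univ : Finset (Fin p)).card := (Finset.card_fin p).symm
          _ ≤ (S ∪ T).card := Finset.card_le_card this
          _ ≤ S.card + T.card := Finset.card_union_le _ _
      omega
    -- map each singleton class to the f-color of its unique vertex
    have hφ : ∀ i : Fin p, ∃ v, P v = i := hPsurj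
    set φ : Fin p → Fin s := fun i => f (Classical.choose (hφ i)) with hφdef
    have hchoose : ∀ i, P (Classical.choose (hφ i)) = i := fun i => Classical.choose_spec (hφ i)
    have huniq : ∀ i ∈ S, ∀ w, P w = i → w = Classical.choose (hφ i) := by
      intro i hi w hw
      have h1 : (fib i).card = 1 := (Finset.mem_filter.mp hi).2
      have hw' : w ∈ fib i := (hfibmem i w).mpr hw
      have hc' : Classical.choose (hφ i) ∈ fib i := (hfibmem i _).mpr (hchoose i)
      exact Finset.card_le_one.mp (le_of_eq h1) w hw' _ hc'
    obtain ⟨i, hiS, j, hjS, hij, hφij⟩ :=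
      Finset.exists_ne_map_eq_of_card_lt_of_maps_to
        (t := (Finset.univ : Finset (Fin s)))
        (by simpa using hScard) (fun a _ => Finset.mem_univ (φ a))
    obtain ⟨e, he, hall, ⟨u, hu, hPu⟩, ⟨v, hv, hPv⟩⟩ := hstuck i j hij
    have hufix : u = Classical.choose (hφ i) := huniq i hiS u hPu
    have hvfix : v = Classical.choose (hφ j) := huniq j hjS v hPv
    have hmemuv : ∀ w ∈ e, w = u ∨ w = v := by
      intro w hw
      rcases hall w hw with h | h
      · exact Or.inl ((huniq i hiS w h).trans hufix.symm)
      · exact Or.inr ((huniq j hjS w h).trans hvfix.symm)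
    obtain ⟨a, ha, b, hb, hab, hfab⟩ := hfD e he
    have hfu : f u = f v := by
      rw [hufix, hvfix]
      exact hφij
    rcases hmemuv a ha with rfl | rfl <;> rcases hmemuv b hb with rfl | rfl
    · exact hab rfl
    · exact hfab hfu
    · exact hfab hfu.symm
    · exact hab rfl
  omega
end

section
/- Let S = {n_1, n_2, ..., n_s} with 2 ≤ n_s < ... < n_2 < n_1 and n_1 > n_2 + 1. If H = (X, C, D) is a one-realization of S, then |X| ≥ 2n_1 - n_s. -/
lemma ncard_range_mem_feasible {V : Type*} (H : MixedHypergraph V) {κ : Type*} [Fintype κ]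
    (f : V → κ)
    (hC : ∀ e ∈ H.Cedges, ∃ u ∈ e, ∃ v ∈ e, u ≠ v ∧ f u = f v)
    (hD : ∀ e ∈ H.Dedges, ∃ u ∈ e, ∃ v ∈ e, u ≠ v ∧ f u ≠ f v) :
    (Set.range f).ncard ∈ FeasibleSet H := by
  haveI : Fintype (Set.range f) := Fintype.ofFinite _
  have hc : (Set.range f).ncard = Fintype.card (Set.range f) := by
    rw [← Nat.card_coe_set_eq, Nat.card_eq_fintype_card]
  let e : Set.range f ≃ Fin ((Set.range f).ncard) :=
    (Fintype.equivFin _).trans (finCongr hc.symm)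
  refine ⟨fun v => e ⟨f v, Set.mem_range_self v⟩, ?_, ?_, ?_⟩
  · intro y
    obtain ⟨v, hv⟩ := (e.symm y).2
    refine ⟨v, ?_⟩
    show e ⟨f v, Set.mem_range_self v⟩ = y
    have h2 : (⟨f v, Set.mem_range_self v⟩ : Set.range f) = e.symm y := Subtype.ext hv
    rw [h2, Equiv.apply_symm_apply]
  · intro s hs
    obtain ⟨u, hu, v, hv, huv, hfe⟩ := hC s hs
    exact ⟨u, hu, v, hv, huv, by simp [Subtype.ext_iff, hfe]⟩
  · intro s hs
    obtain ⟨u, hu, v, hv, huv, hfe⟩ := hD s hs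
    refine ⟨u, hu, v, hv, huv, fun h => hfe ?_⟩
    have := e.injective h
    simpa [Subtype.ext_iff] using this


/-- for `S = {n₁,…,n_s}` with `2 ≤ n_s < ⋯ < n₂ < n₁` and `n₁ > n₂ + 1`,
every one-realization of `S` has at least `2n₁ - n_s` vertices.
Here `n i` is `n_{i+1}` of the paper, so `n 0 = n₁` and `n (s-1) = n_s`. -/
theorem one_realization_lower_bound_gap (s : ℕ) (hs : 2 ≤ s) (n : Fin s → ℕ)
    (hanti : StrictAnti n) (h2 : 2 ≤ n ⟨s - 1, by omega⟩)
    (hgap : n ⟨1, by omega⟩ + 1 < n ⟨0, by omega⟩)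
    (V : Type*) [Fintype V] (H : MixedHypergraph V)
    (hH : IsOneRealization H (Set.range n)) :
    2 * n ⟨0, by omega⟩ - n ⟨s - 1, by omega⟩ ≤ Fintype.card V := by
  classical
  obtain ⟨hfeas, -⟩ := hH
  have h0s : 0 < s := by omega
  have h1s : 1 < s := by omega
  have hls : s - 1 < s := by omega
  set i0 : Fin s := ⟨0, h0s⟩ with hi0
  set i1 : Fin s := ⟨1, h1s⟩ with hi1
  set il : Fin s := ⟨s - 1, hls⟩ with hil
  have hgap' : n i1 + 1 < n i0 := hgap
  have h2' : 2 ≤ n il := h2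
  show 2 * n i0 - n il ≤ Fintype.card V
  set n1 := n i0 with hn1d
  set ns := n il with hnsd
  -- basic inequalities
  have hns_le : ns ≤ n i1 := by
    have h11 : i1 ≤ il := by simp only [hi1, hil, Fin.mk_le_mk]; omega
    exact hanti.antitone h11
  by_contra hcard
  push_neg at hcard
  have hlt : Fintype.card V + ns < 2 * n1 := by omega
  -- get the two strict colorings
  have hmem1 : n1 ∈ FeasibleSet H := by rw [hfeas]; exact ⟨i0, rfl⟩
  have hmems : ns ∈ FeasibleSet H := by rw [hfeas]; exact ⟨il, rfl⟩
  obtain ⟨c, hcsurj, hcC, hcD⟩ := hmem1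
  obtain ⟨c', hc'surj, hc'C, hc'D⟩ := hmems
  -- fibers of c
  set fib : Fin n1 → Finset V := fun j => Finset.univ.filter (fun v => c v = j) with hfibd
  have hsum : Fintype.card V = ∑ j : Fin n1, (fib j).card := by
    rw [← Finset.card_univ]
    exact Finset.card_eq_sum_card_fiberwise (fun x _ => Finset.mem_univ _)
  have hfib1 : ∀ j, 1 ≤ (fib j).card := by
    intro j
    obtain ⟨v, hv⟩ := hcsurj j
    exact Finset.card_pos.mpr ⟨v, by simp [hfibd, hv]⟩
  set A : Finset (Fin n1) := Finset.univ.filter (fun j => (fib j).card = 1) with hAd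
  -- counting: A.card > ns
  have hsplit := Finset.sum_filter_add_sum_filter_not Finset.univ
    (fun j => (fib j).card = 1) (fun j => (fib j).card)
  have h1 : ∑ j ∈ A, (fib j).card = A.card := by
    rw [Finset.card_eq_sum_ones]
    exact Finset.sum_congr rfl (fun j hj => (Finset.mem_filter.mp hj).2)
  have h2'' : ∀ j ∈ Finset.univ.filter (fun j => ¬ (fib j).card = 1),
      2 ≤ (fib j).card := by
    intro j hj
    have := hfib1 j
    have := (Finset.mem_filter.mp hj).2
    omega
  have h3 : (Finset.univ.filter (fun j => ¬ (fib j).card = 1)).card * 2 ≤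
      ∑ j ∈ Finset.univ.filter (fun j => ¬ (fib j).card = 1), (fib j).card := by
    calc _ = ∑ _j ∈ Finset.univ.filter (fun j => ¬ (fib j).card = 1), 2 := by
            rw [Finset.sum_const, smul_eq_mul]
      _ ≤ _ := Finset.sum_le_sum h2''
  have hccount : A.card + (Finset.univ.filter (fun j => ¬ (fib j).card = 1)).card = n1 := by
    rw [hAd, Finset.card_filter_add_card_filter_not, Finset.card_univ, Fintype.card_fin]
  have hA : ns < A.card := by
    have : A.card + (Finset.univ.filter (fun j => ¬ (fib j).card = 1)).card * 2 ≤
        Fintype.card V := by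
      rw [hsum, ← hsplit, h1]
      omega
    omega
  -- pick representatives
  set pick : Fin n1 → V := Function.surjInv hcsurj with hpickd
  have hpick : ∀ k, c (pick k) = k := fun k => Function.surjInv_eq hcsurj k
  have huniq : ∀ k, k ∈ A → ∀ y, c y = k → y = pick k := by
    intro k hk y hy
    obtain ⟨a, ha⟩ := Finset.card_eq_one.mp (Finset.mem_filter.mp hk).2
    have hy1 : y ∈ fib k := by simp [hfibd, hy]
    have hy2 : pick k ∈ fib k := by simp [hfibd, hpick k]
    rw [ha, Finset.mem_singleton] at hy1 hy2
    rw [hy1, hy2]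
  -- pigeonhole
  have hAcard : (Finset.univ : Finset (Fin ns)).card < A.card := by
    simpa using hA
  obtain ⟨j, hjA, i, hiA, hij, hcc⟩ :=
    Finset.exists_ne_map_eq_of_card_lt_of_maps_to hAcard
      (f := fun a => c' (pick a)) (fun a _ => Finset.mem_univ _)
  -- the merged coloring
  set c'' : V → Fin n1 := fun v => if c v = j then i else c v with hc''d
  have hC'' : ∀ e ∈ H.Cedges, ∃ u ∈ e, ∃ v ∈ e, u ≠ v ∧ c'' u = c'' v := by
    intro e he
    obtain ⟨u, hu, v, hv, huv, hfe⟩ := hcC e he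
    refine ⟨u, hu, v, hv, huv, ?_⟩
    simp only [hc''d, hfe]
  have hc''pi : c'' (pick i) = i := by
    simp only [hc''d]
    rw [hpick i]
    simp
  have hD'' : ∀ e ∈ H.Dedges, ∃ u ∈ e, ∃ v ∈ e, u ≠ v ∧ c'' u ≠ c'' v := by
    intro e he
    by_contra hno
    push_neg at hno
    obtain ⟨u, hu, v, hv, huv, hfe⟩ := hcD e he
    have hm : c'' u = c'' v := hno u hu v hv huv
    -- show pick j ∈ e and pick i ∈ e
    have hkey : pick j ∈ e ∧ pick i ∈ e := by
      by_cases h1 : c u = j <;> by_cases h4 : c v = j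
      · exact absurd (h1.trans h4.symm) hfe
      · have hcv : c v = i := by
          have : (i : Fin n1) = c v := by simpa [hc''d, h1, h4] using hm
          exact this.symm
        exact ⟨(huniq j hjA u h1) ▸ hu, (huniq i hiA v hcv) ▸ hv⟩
      · have hcu : c u = i := by
          have : c u = i := by simpa [hc''d, h1, h4] using hm
          exact this
        exact ⟨(huniq j hjA v h4) ▸ hv, (huniq i hiA u hcu) ▸ hu⟩
      · have : c u = c v := by simpa [hc''d, h1, h4] using hm
        exact absurd this hfe
    obtain ⟨hpje, hpie⟩ := hkey
    have hall : ∀ y ∈ e, y = pick j ∨ y = pick i := by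
      intro y hy
      by_cases hyi : y = pick i
      · exact Or.inr hyi
      have hcy : c'' y = i := (hno y hy (pick i) hpie hyi).trans hc''pi
      by_cases hyj : c y = j
      · exact Or.inl (huniq j hjA y hyj)
      · have : c y = i := by simpa [hc''d, hyj] using hcy
        exact Or.inr (huniq i hiA y this)
    obtain ⟨a, ha, b, hb, hab, hab'⟩ := hc'D e he
    rcases hall a ha with h5 | h5 <;> rcases hall b hb with h6 | h6
    · exact hab (h5.trans h6.symm)
    · exact hab' (by rw [h5, h6]; exact hcc)
    · exact hab' (by rw [h5, h6]; exact hcc.symm)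
    · exact hab (h5.trans h6.symm)
  -- range of c'' is the complement of {j}
  have hrange : Set.range c'' = ({j}ᶜ : Set (Fin n1)) := by
    ext k
    simp only [Set.mem_range, Set.mem_compl_iff, Set.mem_singleton_iff]
    constructor
    · rintro ⟨v, rfl⟩
      by_cases h : c v = j
      · have hv : c'' v = i := by simp only [hc''d]; rw [if_pos h]
        rw [hv]
        exact fun hh => hij hh.symm
      · have hv : c'' v = c v := by simp only [hc''d]; rw [if_neg h]
        rw [hv]
        exact h
    · intro hk
      refine ⟨pick k, ?_⟩
      show (if c (pick k) = j then i else c (pick k)) = k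
      rw [hpick k, if_neg hk]
  have hncard : (Set.range c'').ncard = n1 - 1 := by
    rw [hrange]
    have := Set.ncard_add_ncard_compl ({j} : Set (Fin n1))
    rw [Set.ncard_singleton, Nat.card_eq_fintype_card, Fintype.card_fin] at this
    omega
  have hfeas2 : n1 - 1 ∈ FeasibleSet H :=
    hncard ▸ ncard_range_mem_feasible H c'' hC'' hD''
  rw [hfeas] at hfeas2
  obtain ⟨idx, hidx⟩ := hfeas2
  by_cases hidx0 : idx = i0
  · rw [hidx0] at hidx
    omega
  · have hile : i1 ≤ idx := by
      have : idx.1 ≠ 0 := fun h => hidx0 (Fin.ext h)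
      simp [Fin.le_def, hi1]
      omega
    have hle : n idx ≤ n i1 := hanti.antitone hile
    omega
end

section
/- Suppose a mixed hypergraph H = (X, C, D) admits a strict n_1-coloring c_1 = {C_1, ..., C_{n_1}} in which at least three color classes are singletons {α_1}, {α_2}, {α_3}, and admits a strict coloring c in which α_1, α_2, α_3 lie in a common color class. Then none of {α_1,α_2}, {α_1,α_3}, {α_2,α_3} is a D-edge, and merging any one of the pairs of singleton classes in c_1 yields a strict (n_1 - 1)-coloring; in particular H has at least three distinct feasible partitions into n_1 - 1 classes. -/
/-!
Since a strict coloring `g` puts `α₀, α₁, α₂` in one class, no D-edge lies inside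
`{αᵢ, αⱼ}`. Merging two color classes of a strict coloring keeps it strict unless some D-edge
lies inside their union, and for singleton classes that union is `{αᵢ, αⱼ}` itself. The merged
partitions are distinct because the merge of `{αᵢ}` and `{αⱼ}` identifies exactly that pair of
vertices of different `f`-colors.
-/

theorem Fin.exists_surjective_merge {k : ℕ} {a b : Fin (k + 1)} (hab : a ≠ b) :
    ∃ m : Fin (k + 1) → Fin k, Function.Surjective m ∧
      ∀ x y, m x = m y ↔ x = y ∨ (x ∈ ({a, b} : Set _) ∧ y ∈ ({a, b} : Set _)) := by
  obtain ⟨c, rfl⟩ := Fin.exists_succAbove_eq hab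
  refine ⟨fun x => (finSuccEquiv' b x).getD c, fun z => ⟨b.succAbove z, by simp⟩, ?_⟩
  simp [b.forall_iff_succAbove, eq_comm]

section

variable {V : Type*} {H : MixedHypergraph V}

theorem IsStrictColoring.notMem_Dedges_of_subset_fiber {k : ℕ} {g : V → Fin k}
    (hg : IsStrictColoring H k g) {e : Set V} {c : Fin k} (he : e ⊆ g ⁻¹' {c}) :
    e ∉ H.Dedges := fun hD => by
  obtain ⟨u, hu, v, hv, -, hne⟩ := hg.2.2 e hD
  exact hne ((he hu).trans (he hv).symm)

theorem IsStrictColoring.eq_pair_of_subset {k : ℕ} {f : V → Fin k}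
    (hf : IsStrictColoring H k f) {e : Set V} (he : e ∈ H.Dedges) {x y : V}
    (hexy : e ⊆ {x, y}) : e = {x, y} := by
  obtain ⟨u, hu, v, hv, huv, -⟩ := hf.2.2 e he
  refine hexy.antisymm (Set.pair_subset_iff.2 ?_)
  rcases hexy hu with rfl | rfl <;> rcases hexy hv with rfl | rfl <;> simp_all

theorem IsStrictColoring.comp_merge {k : ℕ} {f : V → Fin (k + 1)}
    (hf : IsStrictColoring H (k + 1) f) {a b : Fin (k + 1)} {m : Fin (k + 1) → Fin k}
    (hm : Function.Surjective m)
    (hmab : ∀ x y, m x = m y ↔ x = y ∨ (x ∈ ({a, b} : Set _) ∧ y ∈ ({a, b} : Set _)))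
    (hD : ∀ e ∈ H.Dedges, ¬ e ⊆ f ⁻¹' {a, b}) :
    IsStrictColoring H k (m ∘ f) := by
  obtain ⟨hsurj, hC, hDf⟩ := hf
  refine ⟨hm.comp hsurj, fun e he => ?_, fun e he => ?_⟩
  · obtain ⟨u, hu, v, hv, huv, h⟩ := hC e he
    exact ⟨u, hu, v, hv, huv, congrArg m h⟩
  · by_contra! hmono
    obtain ⟨u, hu, v, hv, huv, hne⟩ := hDf e he
    have hua : f u ∈ ({a, b} : Set _) :=
      (((hmab _ _).1 (hmono u hu v hv huv)).resolve_left hne).1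
    refine hD e he fun w hw => ?_
    have hwu : m (f w) = m (f u) := by
      by_cases hwu : w = u
      · rw [hwu]
      · exact hmono w hw u hu hwu
    rcases (hmab _ _).1 hwu with h | ⟨hwa, -⟩
    · rw [Set.mem_preimage, h]
      exact hua
    · exact hwa

theorem preimage_pair_of_singleton_fibers {k : ℕ} {f : V → Fin k} {x y : V}
    (hx : ∀ v, f v = f x → v = x) (hy : ∀ v, f v = f y → v = y) :
    f ⁻¹' {f x, f y} = {x, y} := by
  ext v
  constructor
  · rintro (h | h)
    exacts [Or.inl (hx v h), Or.inr (hy v h)]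
  · rintro (rfl | rfl) <;> simp

theorem IsStrictColoring.exists_merge_singletons {n : ℕ} {f : V → Fin (n + 1)}
    (hf : IsStrictColoring H (n + 1) f) {x y : V}
    (hx : ∀ v, f v = f x → v = x) (hy : ∀ v, f v = f y → v = y) (hxy : x ≠ y)
    (hD : ({x, y} : Set V) ∉ H.Dedges) :
    ∃ h : V → Fin n, IsStrictColoring H n h ∧
      ∀ u v, h u = h v ↔ f u = f v ∨ ({u, v} : Set V) ⊆ {x, y} := by
  have hpre := preimage_pair_of_singleton_fibers hx hy
  obtain ⟨m, hm, hmab⟩ := Fin.exists_surjective_merge fun h => hxy (hy x h)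
  refine ⟨m ∘ f, hf.comp_merge hm hmab fun e he hsub => ?_, fun u v => ?_⟩
  · rw [hpre] at hsub
    exact hD (hf.eq_pair_of_subset he hsub ▸ he)
  · rw [Function.comp_apply, Function.comp_apply, hmab, Set.pair_subset_iff, ← hpre]
    rfl

end

/-- if `H` has a strict `n₁`-coloring `f` with three singleton color
classes `{α₀},{α₁},{α₂}` and a strict coloring `g` putting `α₀,α₁,α₂` in a common
class, then no pair `{αᵢ,αⱼ}` is a D-edge, merging any one of these pairs of
singleton classes yields a strict `(n₁-1)`-coloring, and merging different pairs
yields distinct feasible partitions into `n₁ - 1` classes (so there are at least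
three such partitions). -/
theorem three_merges (V : Type*) (H : MixedHypergraph V) (n1 : ℕ)
    (f : V → Fin n1) (hf : IsStrictColoring H n1 f)
    (α : Fin 3 → V) (hinj : Function.Injective α)
    (hsingle : ∀ i : Fin 3, ∀ v : V, f v = f (α i) → v = α i)
    (k : ℕ) (g : V → Fin k) (hg : IsStrictColoring H k g)
    (hcommon : g (α 0) = g (α 1) ∧ g (α 1) = g (α 2)) :
    (∀ i j : Fin 3, i ≠ j → ({α i, α j} : Set V) ∉ H.Dedges) ∧
    (∀ i j : Fin 3, i ≠ j → ∃ h : V → Fin (n1 - 1),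
      IsStrictColoring H (n1 - 1) h ∧
      (∀ u v : V, h u = h v ↔ (f u = f v ∨ ({u, v} : Set V) ⊆ {α i, α j}))) ∧
    (∀ (i j i' j' : Fin 3) (h h' : V → Fin (n1 - 1)),
      i ≠ j → i' ≠ j' → ({i, j} : Finset (Fin 3)) ≠ {i', j'} →
      (∀ u v : V, h u = h v ↔ (f u = f v ∨ ({u, v} : Set V) ⊆ {α i, α j})) →
      (∀ u v : V, h' u = h' v ↔ (f u = f v ∨ ({u, v} : Set V) ⊆ {α i', α j'})) →
      ¬ SamePartition h h') := by
  obtain ⟨n, rfl⟩ : ∃ n, n1 = n + 1 := Nat.exists_eq_succ_of_ne_zero (f (α 0)).pos.ne'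
  have hgα : ∀ i, g (α i) = g (α 0) := by
    intro i
    fin_cases i <;> simp [hcommon.1, hcommon.2]
  have hDα : ∀ i j : Fin 3, i ≠ j → ({α i, α j} : Set V) ∉ H.Dedges := fun i j _ =>
    hg.notMem_Dedges_of_subset_fiber (Set.pair_subset_iff.2 ⟨hgα i, hgα j⟩)
  refine ⟨hDα, fun i j hij =>
    hf.exists_merge_singletons (hsingle i) (hsingle j) (hinj.ne hij) (hDα i j hij), ?_⟩
  intro i j i' j' h h' hij _ hne hh hh' hsame
  have hsub : ({α i, α j} : Set V) ⊆ {α i', α j'} :=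
    ((hh' _ _).1 ((hsame _ _).1 ((hh _ _).2 (Or.inr subset_rfl)))).resolve_left
      fun h => hij (hinj (hsingle j _ h))
  rw [← Set.image_pair, ← Set.image_pair, Set.image_subset_image_iff hinj,
    ← Finset.coe_pair, ← Finset.coe_pair, Finset.coe_subset] at hsub
  exact hne <| Finset.eq_of_subset_of_card_le hsub <| by
    rw [Finset.card_pair hij]
    exact Finset.card_le_two
end

section
/- For integers 2 ≤ n_2 < n_1, the mixed hypergraph H*_{n_1,n_2} (defined in the context) on 2n_1 - n_2 vertices is a one-realization of {n_1, n_2}: its only strict colorings are the two projections c_1 (coloring by first coordinate, using n_1 colors) and c_2 (coloring by second coordinate, using n_2 colors). -/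
/-- Vertex set of `H*_{n₁,n₂}`: the pairs `(i,i)` for `i ∈ [n₂-1]`,
`(j,n₂)` and `(j,1)` for `n₂ ≤ j ≤ n₁-1`, and `(n₁,n₂)`. -/
def Xstar (n1 n2 : ℕ) : Set (ℕ × ℕ) :=
  {p | (p.1 = p.2 ∧ 1 ≤ p.1 ∧ p.1 + 1 ≤ n2) ∨
       (n2 ≤ p.1 ∧ p.1 + 1 ≤ n1 ∧ (p.2 = n2 ∨ p.2 = 1)) ∨
       p = (n1, n2)}

/-- The mixed hypergraph `H*_{n₁,n₂}`: D-edges are pairs of vertices differing in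
both coordinates; C-edges are triples in which each coordinate takes exactly two
distinct values. -/
def Hstar2 (n1 n2 : ℕ) : MixedHypergraph (Xstar n1 n2) where
  Cedges := {e | ∃ u v w : Xstar n1 n2, u ≠ v ∧ u ≠ w ∧ v ≠ w ∧ e = {u, v, w} ∧
    ({(u : ℕ × ℕ).1, (v : ℕ × ℕ).1, (w : ℕ × ℕ).1} : Finset ℕ).card = 2 ∧
    ({(u : ℕ × ℕ).2, (v : ℕ × ℕ).2, (w : ℕ × ℕ).2} : Finset ℕ).card = 2}
  Dedges := {e | ∃ u v : Xstar n1 n2, e = {u, v} ∧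
    (u : ℕ × ℕ).1 ≠ (v : ℕ × ℕ).1 ∧ (u : ℕ × ℕ).2 ≠ (v : ℕ × ℕ).2}
section Helpers
variable {n1 n2 : ℕ}

lemma memA {j : ℕ} (ha : n2 ≤ j) (hb : j + 1 ≤ n1) : ((j, n2) : ℕ × ℕ) ∈ Xstar n1 n2 :=
  Or.inr (Or.inl ⟨ha, hb, Or.inl rfl⟩)

lemma memB {j : ℕ} (ha : n2 ≤ j) (hb : j + 1 ≤ n1) : ((j, 1) : ℕ × ℕ) ∈ Xstar n1 n2 :=
  Or.inr (Or.inl ⟨ha, hb, Or.inr rfl⟩)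

lemma memC {i : ℕ} (ha : 1 ≤ i) (hb : i + 1 ≤ n2) : ((i, i) : ℕ × ℕ) ∈ Xstar n1 n2 :=
  Or.inl ⟨rfl, ha, hb⟩

lemma memT : ((n1, n2) : ℕ × ℕ) ∈ Xstar n1 n2 := Or.inr (Or.inr rfl)

lemma vert_cases (u : Xstar n1 n2) :
    (∃ i, 1 ≤ i ∧ i + 1 ≤ n2 ∧ (u : ℕ × ℕ) = (i, i)) ∨
    (∃ j, n2 ≤ j ∧ j + 1 ≤ n1 ∧ ((u : ℕ × ℕ) = (j, n2) ∨ (u : ℕ × ℕ) = (j, 1))) ∨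
    (u : ℕ × ℕ) = (n1, n2) := by
  obtain ⟨⟨a, b⟩, h⟩ := u
  rcases h with ⟨h, ha, hb⟩ | ⟨ha, hb, h | h⟩ | h
  · exact Or.inl ⟨a, ha, by simp at h ⊢; omega⟩
  · exact Or.inr (Or.inl ⟨a, ha, hb, Or.inl (Prod.ext rfl h)⟩)
  · exact Or.inr (Or.inl ⟨a, ha, hb, Or.inr (Prod.ext rfl h)⟩)
  · exact Or.inr (Or.inr h)

lemma ne_of_fst {u v : Xstar n1 n2} (h : (u : ℕ × ℕ).1 ≠ (v : ℕ × ℕ).1) : u ≠ v :=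
  fun e => h (by rw [e])

lemma ne_of_snd {u v : Xstar n1 n2} (h : (u : ℕ × ℕ).2 ≠ (v : ℕ × ℕ).2) : u ≠ v :=
  fun e => h (by rw [e])

lemma D_ne {k : ℕ} {f : Xstar n1 n2 → Fin k} (hf : IsStrictColoring (Hstar2 n1 n2) k f)
    (u v : Xstar n1 n2) (h1 : (u : ℕ × ℕ).1 ≠ (v : ℕ × ℕ).1)
    (h2 : (u : ℕ × ℕ).2 ≠ (v : ℕ × ℕ).2) : f u ≠ f v := by
  obtain ⟨-, -, hD⟩ := hf
  obtain ⟨x, hx, y, hy, hxy, hfxy⟩ := hD {u, v} ⟨u, v, rfl, h1, h2⟩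
  rcases hx with hx | hx <;> rcases hy with hy | hy <;> subst hx <;> subst hy
  · exact absurd rfl hxy
  · exact hfxy
  · exact fun h => hfxy h.symm
  · exact absurd rfl hxy

lemma card2 {x y z : ℕ} (h : ({x, y, z} : Finset ℕ).card = 2) : x = y ∨ x = z ∨ y = z := by
  by_contra hc
  push_neg at hc
  obtain ⟨h1, h2, h3⟩ := hc
  rw [Finset.card_insert_of_notMem (by simp [h1, h2]),
    Finset.card_insert_of_notMem (by simp [h3]), Finset.card_singleton] at h
  omega

lemma card2' {x y : ℕ} (h : x ≠ y) {s : Finset ℕ} (hs : s = {x, y}) : s.card = 2 :=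
  hs ▸ Finset.card_pair h

lemma C_eq {k : ℕ} {f : Xstar n1 n2 → Fin k} (hf : IsStrictColoring (Hstar2 n1 n2) k f)
    (u v w : Xstar n1 n2) (huv : u ≠ v) (huw : u ≠ w) (hvw : v ≠ w)
    (hc1 : ({(u : ℕ × ℕ).1, (v : ℕ × ℕ).1, (w : ℕ × ℕ).1} : Finset ℕ).card = 2)
    (hc2 : ({(u : ℕ × ℕ).2, (v : ℕ × ℕ).2, (w : ℕ × ℕ).2} : Finset ℕ).card = 2) :
    f u = f v ∨ f u = f w ∨ f v = f w := by
  obtain ⟨-, hC, -⟩ := hf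
  obtain ⟨x, hx, y, hy, hxy, hfxy⟩ := hC {u, v, w} ⟨u, v, w, huv, huw, hvw, rfl, hc1, hc2⟩
  rcases hx with hx | hx | hx <;> rcases hy with hy | hy | hy <;> subst hx <;> subst hy <;>
    first
      | exact absurd rfl hxy
      | exact Or.inl hfxy
      | exact Or.inl hfxy.symm
      | exact Or.inr (Or.inl hfxy)
      | exact Or.inr (Or.inl hfxy.symm)
      | exact Or.inr (Or.inr hfxy)
      | exact Or.inr (Or.inr hfxy.symm)

end Helpers
section Helpers2
variable {n1 n2 : ℕ}

lemma eq_first (hn2 : 2 ≤ n2) (hlt : n2 < n1) {u v : Xstar n1 n2} (hne : u ≠ v)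
    (h : (u : ℕ × ℕ).1 = (v : ℕ × ℕ).1) :
    ∃ j, n2 ≤ j ∧ j + 1 ≤ n1 ∧
      (((u : ℕ × ℕ) = (j, n2) ∧ (v : ℕ × ℕ) = (j, 1)) ∨
       ((u : ℕ × ℕ) = (j, 1) ∧ (v : ℕ × ℕ) = (j, n2))) := by
  rcases vert_cases u with ⟨i, hi1, hi2, hu⟩ | ⟨j, hj1, hj2, hu | hu⟩ | hu <;>
  rcases vert_cases v with ⟨i', hi1', hi2', hv⟩ | ⟨j', hj1', hj2', hv | hv⟩ | hv <;>
    rw [hu, hv] at h <;> simp at h <;>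
    first
      | omega
      | exact ⟨j, hj1, hj2, Or.inl ⟨hu, hv.trans (congrArg (fun x => (x, 1)) h.symm)⟩⟩
      | exact ⟨j, hj1, hj2, Or.inr ⟨hu, hv.trans (congrArg (fun x => (x, n2)) h.symm)⟩⟩
      | exact absurd (Subtype.ext (hu.trans ((congrArg (fun x => (x, x)) h).trans hv.symm))) hne
      | exact absurd (Subtype.ext (hu.trans ((congrArg (fun x => (x, n2)) h).trans hv.symm))) hne
      | exact absurd (Subtype.ext (hu.trans ((congrArg (fun x => (x, 1)) h).trans hv.symm))) hne
      | exact absurd (Subtype.ext (hu.trans hv.symm)) hne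

lemma snd_one (hn2 : 2 ≤ n2) {u : Xstar n1 n2} (h : (u : ℕ × ℕ).2 = 1) :
    (u : ℕ × ℕ) = (1, 1) ∨ ∃ j, n2 ≤ j ∧ j + 1 ≤ n1 ∧ (u : ℕ × ℕ) = (j, 1) := by
  rcases vert_cases u with ⟨i, hi1, hi2, hu⟩ | ⟨j, hj1, hj2, hu | hu⟩ | hu <;>
    rw [hu] at h <;> simp at h
  · exact Or.inl (by rw [hu, h])
  · omega
  · exact Or.inr ⟨j, hj1, hj2, hu⟩
  · omega

lemma snd_n2 (hn2 : 2 ≤ n2) {u : Xstar n1 n2} (h : (u : ℕ × ℕ).2 = n2) :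
    (u : ℕ × ℕ) = (n1, n2) ∨ ∃ j, n2 ≤ j ∧ j + 1 ≤ n1 ∧ (u : ℕ × ℕ) = (j, n2) := by
  rcases vert_cases u with ⟨i, hi1, hi2, hu⟩ | ⟨j, hj1, hj2, hu | hu⟩ | hu <;>
    rw [hu] at h <;> simp at h
  · omega
  · exact Or.inr ⟨j, hj1, hj2, hu⟩
  · omega
  · exact Or.inl hu

lemma snd_mid {u : Xstar n1 n2} (h1 : (u : ℕ × ℕ).2 ≠ 1) (h2 : (u : ℕ × ℕ).2 ≠ n2) :
    (u : ℕ × ℕ) = ((u : ℕ × ℕ).2, (u : ℕ × ℕ).2) := by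
  rcases vert_cases u with ⟨i, hi1, hi2, hu⟩ | ⟨j, hj1, hj2, hu | hu⟩ | hu <;>
    rw [hu] at h1 h2 ⊢ <;> simp at h1 h2 ⊢

lemma fst_bounds (hn2 : 2 ≤ n2) (hlt : n2 < n1) (u : Xstar n1 n2) :
    1 ≤ (u : ℕ × ℕ).1 ∧ (u : ℕ × ℕ).1 ≤ n1 := by
  rcases vert_cases u with ⟨i, hi1, hi2, hu⟩ | ⟨j, hj1, hj2, hu | hu⟩ | hu <;>
    rw [hu] <;> simp <;> omega

lemma snd_bounds (hn2 : 2 ≤ n2) (hlt : n2 < n1) (u : Xstar n1 n2) :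
    1 ≤ (u : ℕ × ℕ).2 ∧ (u : ℕ × ℕ).2 ≤ n2 := by
  rcases vert_cases u with ⟨i, hi1, hi2, hu⟩ | ⟨j, hj1, hj2, hu | hu⟩ | hu <;>
    rw [hu] <;> simp <;> omega

lemma exists_fst (hn2 : 2 ≤ n2) (hlt : n2 < n1) {m : ℕ} (h1 : 1 ≤ m) (h2 : m ≤ n1) :
    ∃ u : Xstar n1 n2, (u : ℕ × ℕ).1 = m := by
  rcases Nat.lt_or_ge m n2 with hm | hm
  · exact ⟨⟨(m, m), memC h1 (by omega)⟩, rfl⟩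
  rcases Nat.lt_or_ge m n1 with hm' | hm'
  · exact ⟨⟨(m, n2), memA hm (by omega)⟩, rfl⟩
  · exact ⟨⟨(n1, n2), memT⟩, show (n1, n2).1 = m by simp; omega⟩

lemma exists_snd (hn2 : 2 ≤ n2) (hlt : n2 < n1) {m : ℕ} (h1 : 1 ≤ m) (h2 : m ≤ n2) :
    ∃ u : Xstar n1 n2, (u : ℕ × ℕ).2 = m := by
  rcases Nat.lt_or_ge m n2 with hm | hm
  · exact ⟨⟨(m, m), memC h1 (by omega)⟩, rfl⟩
  · exact ⟨⟨(n1, n2), memT⟩, show (n1, n2).2 = m by simp; omega⟩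

lemma card_of_proj {k n : ℕ} {V : Type*} {f : V → Fin k} (hs : Function.Surjective f)
    (p : V → ℕ) (hiff : ∀ u v, f u = f v ↔ p u = p v)
    (hb : ∀ u, 1 ≤ p u ∧ p u ≤ n) (hx : ∀ m, 1 ≤ m → m ≤ n → ∃ u, p u = m) : k = n := by
  classical
  set s := Function.surjInv hs with hsdef
  have hfs : ∀ i, f (s i) = i := Function.surjInv_eq hs
  set F : Fin k → ℕ := fun i => p (s i) with hFdef
  have hFinj : Function.Injective F := by
    intro i j hij
    have := (hiff (s i) (s j)).mpr hij
    rw [hfs, hfs] at this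
    exact this
  have himg : Finset.univ.image F = Finset.Icc 1 n := by
    ext m
    simp only [Finset.mem_image, Finset.mem_univ, true_and, Finset.mem_Icc]
    constructor
    · rintro ⟨i, rfl⟩; exact hb _
    · rintro ⟨hm1, hm2⟩
      obtain ⟨u, hu⟩ := hx m hm1 hm2
      refine ⟨f u, ?_⟩
      have : p (s (f u)) = p u := (hiff _ _).mp (hfs (f u))
      rw [hFdef]
      simp only []
      rw [this, hu]
  have hc : (Finset.univ.image F).card = k := by
    rw [Finset.card_image_of_injective _ hFinj, Finset.card_univ, Fintype.card_fin]
  rw [himg, Nat.card_Icc] at hc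
  omega

end Helpers2
section Main
variable {n1 n2 : ℕ}

lemma tripA {x y : ℕ} (h : x ≠ y) : ({x, x, y} : Finset ℕ).card = 2 :=
  card2' h (by ext z; simp; try tauto)

lemma tripB {x y : ℕ} (h : x ≠ y) : ({x, y, x} : Finset ℕ).card = 2 :=
  card2' h (by ext z; simp; try tauto)

lemma tripC {x y : ℕ} (h : x ≠ y) : ({x, y, y} : Finset ℕ).card = 2 :=
  card2' h (by ext z; simp; try tauto)

/-- the vertex `(j, n₂)` -/
abbrev vJ (n1 n2 j : ℕ) (ha : n2 ≤ j) (hb : j + 1 ≤ n1) : Xstar n1 n2 := ⟨(j, n2), memA ha hb⟩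
/-- the vertex `(j, 1)` -/
abbrev wJ (n1 n2 j : ℕ) (ha : n2 ≤ j) (hb : j + 1 ≤ n1) : Xstar n1 n2 := ⟨(j, 1), memB ha hb⟩
/-- the vertex `(n₁, n₂)` -/
abbrev vT (n1 n2 : ℕ) : Xstar n1 n2 := ⟨(n1, n2), memT⟩
/-- the vertex `(1, 1)` -/
abbrev vC1 (n1 n2 : ℕ) (h : 2 ≤ n2) : Xstar n1 n2 := ⟨(1, 1), memC le_rfl h⟩

lemma dichotomy (hn2 : 2 ≤ n2) (hlt : n2 < n1) {k : ℕ} {f : Xstar n1 n2 → Fin k}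
    (hf : IsStrictColoring (Hstar2 n1 n2) k f) :
    (∀ u v, f u = f v ↔ (u : ℕ × ℕ).1 = (v : ℕ × ℕ).1) ∨
    (∀ u v, f u = f v ↔ (u : ℕ × ℕ).2 = (v : ℕ × ℕ).2) := by
  have hA : n2 ≤ n2 := le_rfl
  by_cases hAB : f (vJ n1 n2 n2 le_rfl hlt) = f (wJ n1 n2 n2 le_rfl hlt)
  · -- merged: first-coordinate partition
    left
    have merged : ∀ (j : ℕ) (ha : n2 ≤ j) (hb : j + 1 ≤ n1),
        f (vJ n1 n2 j ha hb) = f (wJ n1 n2 j ha hb) := by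
      intro j ha hb
      rcases eq_or_ne j n2 with rfl | hj
      · exact hAB
      · have hc := C_eq hf (vJ n1 n2 j ha hb) (wJ n1 n2 j ha hb) (vJ n1 n2 n2 le_rfl hlt)
          (ne_of_snd (show n2 ≠ 1 by omega)) (ne_of_fst hj) (ne_of_fst hj)
          (tripA hj) (tripB (show n2 ≠ 1 by omega))
        rcases hc with h | h | h
        · exact h
        · exact absurd (h.trans hAB)
            (D_ne hf _ (wJ n1 n2 n2 le_rfl hlt) hj (show n2 ≠ 1 by omega))
        · exact absurd h (D_ne hf _ (vJ n1 n2 n2 le_rfl hlt) hj (show (1:ℕ) ≠ n2 by omega))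
    have nofst : ∀ u v : Xstar n1 n2, f u = f v → (u : ℕ × ℕ).1 = (v : ℕ × ℕ).1 := by
      intro u v hfv
      by_contra hne1
      have hne : u ≠ v := ne_of_fst hne1
      by_cases hne2 : (u : ℕ × ℕ).2 = (v : ℕ × ℕ).2
      · rcases eq_or_ne ((u : ℕ × ℕ).2) 1 with h1 | h1
        · -- both second coordinates equal 1
          have h1' : (v : ℕ × ℕ).2 = 1 := by rw [← hne2]; exact h1
          rcases snd_one hn2 h1 with hu | ⟨j, ha, hb, hu⟩ <;>
            rcases snd_one hn2 h1' with hv | ⟨j', ha', hb', hv⟩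
          · exact hne1 (by rw [hu, hv])
          · rw [show u = vC1 n1 n2 hn2 from Subtype.ext hu,
              show v = wJ n1 n2 j' ha' hb' from Subtype.ext hv] at hfv
            exact D_ne hf (vC1 n1 n2 hn2) (vJ n1 n2 j' ha' hb')
              (show 1 ≠ j' by omega) (show 1 ≠ n2 by omega)
              (hfv.trans (merged j' ha' hb').symm)
          · rw [show v = vC1 n1 n2 hn2 from Subtype.ext hv,
              show u = wJ n1 n2 j ha hb from Subtype.ext hu] at hfv
            exact D_ne hf (vC1 n1 n2 hn2) (vJ n1 n2 j ha hb)
              (show 1 ≠ j by omega) (show 1 ≠ n2 by omega)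
              (hfv.symm.trans (merged j ha hb).symm)
          · have hjj : j ≠ j' := by
              intro h; exact hne1 (by rw [hu, hv, h])
            rw [show u = wJ n1 n2 j ha hb from Subtype.ext hu,
              show v = wJ n1 n2 j' ha' hb' from Subtype.ext hv] at hfv
            exact D_ne hf (wJ n1 n2 j ha hb) (vJ n1 n2 j' ha' hb')
              hjj (show (1:ℕ) ≠ n2 by omega)
              (hfv.trans (merged j' ha' hb').symm)
        rcases eq_or_ne ((u : ℕ × ℕ).2) n2 with hn | hn
        · -- both second coordinates equal n2
          have hn' : (v : ℕ × ℕ).2 = n2 := by rw [← hne2]; exact hn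
          rcases snd_n2 hn2 hn with hu | ⟨j, ha, hb, hu⟩ <;>
            rcases snd_n2 hn2 hn' with hv | ⟨j', ha', hb', hv⟩
          · exact hne1 (by rw [hu, hv])
          · rw [show u = vT n1 n2 from Subtype.ext hu,
              show v = vJ n1 n2 j' ha' hb' from Subtype.ext hv] at hfv
            exact D_ne hf (vT n1 n2) (wJ n1 n2 j' ha' hb')
              (show n1 ≠ j' by omega) (show n2 ≠ 1 by omega)
              (hfv.trans (merged j' ha' hb'))
          · rw [show v = vT n1 n2 from Subtype.ext hv,
              show u = vJ n1 n2 j ha hb from Subtype.ext hu] at hfv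
            exact D_ne hf (vT n1 n2) (wJ n1 n2 j ha hb)
              (show n1 ≠ j by omega) (show n2 ≠ 1 by omega)
              (hfv.symm.trans (merged j ha hb))
          · have hjj : j ≠ j' := by
              intro h; exact hne1 (by rw [hu, hv, h])
            rw [show u = vJ n1 n2 j ha hb from Subtype.ext hu,
              show v = vJ n1 n2 j' ha' hb' from Subtype.ext hv] at hfv
            exact D_ne hf (vJ n1 n2 j ha hb) (wJ n1 n2 j' ha' hb')
              hjj (show n2 ≠ 1 by omega)
              (hfv.trans (merged j' ha' hb'))
        · -- middle second coordinate: u and v are forced equal, contradiction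
          have hu := snd_mid h1 hn
          have h1' : (v : ℕ × ℕ).2 ≠ 1 := by rw [← hne2]; exact h1
          have hn' : (v : ℕ × ℕ).2 ≠ n2 := by rw [← hne2]; exact hn
          have hv := snd_mid h1' hn'
          apply hne1
          rw [hu, hv, hne2]
      · exact D_ne hf u v hne1 hne2 hfv
    intro u v
    refine ⟨nofst u v, fun h1 => ?_⟩
    rcases eq_or_ne u v with rfl | hne
    · rfl
    · obtain ⟨j, ha, hb, ⟨hu, hv⟩ | ⟨hu, hv⟩⟩ := eq_first hn2 hlt hne h1
      · rw [show u = vJ n1 n2 j ha hb from Subtype.ext hu,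
          show v = wJ n1 n2 j ha hb from Subtype.ext hv]
        exact merged j ha hb
      · rw [show u = wJ n1 n2 j ha hb from Subtype.ext hu,
          show v = vJ n1 n2 j ha hb from Subtype.ext hv]
        exact (merged j ha hb).symm
  · -- split: second-coordinate partition
    right
    have hAT : f (vJ n1 n2 n2 le_rfl hlt) = f (vT n1 n2) := by
      have hc := C_eq hf (vJ n1 n2 n2 le_rfl hlt) (wJ n1 n2 n2 le_rfl hlt) (vT n1 n2)
        (ne_of_snd (show n2 ≠ 1 by omega)) (ne_of_fst (show n2 ≠ n1 by omega))
        (ne_of_fst (show n2 ≠ n1 by omega))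
        (tripA (show n2 ≠ n1 by omega)) (tripB (show n2 ≠ 1 by omega))
      rcases hc with h | h | h
      · exact absurd h hAB
      · exact h
      · exact absurd h (D_ne hf (wJ n1 n2 n2 le_rfl hlt) (vT n1 n2)
          (show n2 ≠ n1 by omega) (show 1 ≠ n2 by omega))
    have hBC : f (wJ n1 n2 n2 le_rfl hlt) = f (vC1 n1 n2 hn2) := by
      have hc := C_eq hf (vJ n1 n2 n2 le_rfl hlt) (wJ n1 n2 n2 le_rfl hlt) (vC1 n1 n2 hn2)
        (ne_of_snd (show n2 ≠ 1 by omega)) (ne_of_fst (show n2 ≠ 1 by omega))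
        (ne_of_fst (show n2 ≠ 1 by omega))
        (tripA (show n2 ≠ 1 by omega)) (tripC (show n2 ≠ 1 by omega))
      rcases hc with h | h | h
      · exact absurd h hAB
      · exact absurd h (D_ne hf (vJ n1 n2 n2 le_rfl hlt) (vC1 n1 n2 hn2)
          (show n2 ≠ 1 by omega) (show n2 ≠ 1 by omega))
      · exact h
    have haT : ∀ (j : ℕ) (ha : n2 ≤ j) (hb : j + 1 ≤ n1),
        f (vJ n1 n2 j ha hb) = f (vT n1 n2) := by
      intro j ha hb
      rcases eq_or_ne j n2 with rfl | hj
      · exact hAT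
      · have hc := C_eq hf (vJ n1 n2 j ha hb) (vJ n1 n2 n2 le_rfl hlt) (wJ n1 n2 n2 le_rfl hlt)
          (ne_of_fst hj) (ne_of_fst hj) (ne_of_snd (show n2 ≠ 1 by omega))
          (tripC hj) (tripA (show n2 ≠ 1 by omega))
        rcases hc with h | h | h
        · exact h.trans hAT
        · exact absurd h (D_ne hf (vJ n1 n2 j ha hb) (wJ n1 n2 n2 le_rfl hlt)
            hj (show n2 ≠ 1 by omega))
        · exact absurd h hAB
    have hbC : ∀ (j : ℕ) (ha : n2 ≤ j) (hb : j + 1 ≤ n1),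
        f (wJ n1 n2 j ha hb) = f (vC1 n1 n2 hn2) := by
      intro j ha hb
      rcases eq_or_ne j n2 with rfl | hj
      · exact hBC
      · have hc := C_eq hf (wJ n1 n2 j ha hb) (vJ n1 n2 n2 le_rfl hlt) (wJ n1 n2 n2 le_rfl hlt)
          (ne_of_fst hj) (ne_of_fst hj) (ne_of_snd (show n2 ≠ 1 by omega))
          (tripC hj) (tripB (show (1:ℕ) ≠ n2 by omega))
        rcases hc with h | h | h
        · exact absurd h (D_ne hf (wJ n1 n2 j ha hb) (vJ n1 n2 n2 le_rfl hlt)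
            hj (show (1:ℕ) ≠ n2 by omega))
        · exact h.trans hBC
        · exact absurd h hAB
    have class2 : ∀ u : Xstar n1 n2,
        ((u : ℕ × ℕ).2 = n2 → f u = f (vT n1 n2)) ∧
        ((u : ℕ × ℕ).2 = 1 → f u = f (vC1 n1 n2 hn2)) := by
      intro u
      constructor
      · intro h
        rcases snd_n2 hn2 h with hu | ⟨j, ha, hb, hu⟩
        · rw [show u = vT n1 n2 from Subtype.ext hu]
        · rw [show u = vJ n1 n2 j ha hb from Subtype.ext hu]; exact haT j ha hb
      · intro h
        rcases snd_one hn2 h with hu | ⟨j, ha, hb, hu⟩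
        · rw [show u = vC1 n1 n2 hn2 from Subtype.ext hu]
        · rw [show u = wJ n1 n2 j ha hb from Subtype.ext hu]; exact hbC j ha hb
    have hTC : f (vT n1 n2) ≠ f (vC1 n1 n2 hn2) :=
      D_ne hf _ _ (show n1 ≠ 1 by omega) (show n2 ≠ 1 by omega)
    intro u v
    constructor
    · intro hfv
      by_contra hne2
      have hne : u ≠ v := ne_of_snd hne2
      by_cases hne1 : (u : ℕ × ℕ).1 = (v : ℕ × ℕ).1
      · obtain ⟨j, ha, hb, ⟨hu, hv⟩ | ⟨hu, hv⟩⟩ := eq_first hn2 hlt hne hne1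
        · exact hTC ((((class2 u).1 (by rw [hu])).symm.trans (hfv.trans
            ((class2 v).2 (by rw [hv])))))
        · exact hTC ((((class2 v).1 (by rw [hv])).symm.trans (hfv.symm.trans
            ((class2 u).2 (by rw [hu])))))
      · exact D_ne hf u v hne1 hne2 hfv
    · intro h2eq
      rcases eq_or_ne ((u : ℕ × ℕ).2) 1 with h1 | h1
      · exact ((class2 u).2 h1).trans ((class2 v).2 (by rw [← h2eq]; exact h1)).symm
      rcases eq_or_ne ((u : ℕ × ℕ).2) n2 with hn | hn
      · exact ((class2 u).1 hn).trans ((class2 v).1 (by rw [← h2eq]; exact hn)).symm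
      · have hu := snd_mid h1 hn
        have h1' : (v : ℕ × ℕ).2 ≠ 1 := by rw [← h2eq]; exact h1
        have hn' : (v : ℕ × ℕ).2 ≠ n2 := by rw [← h2eq]; exact hn
        have hv := snd_mid h1' hn'
        rw [show u = v from Subtype.ext (by rw [hu, hv, h2eq])]

end Main
section Final
variable {n1 n2 : ℕ}

lemma strict1 (hn2 : 2 ≤ n2) (hlt : n2 < n1) :
    IsStrictColoring (Hstar2 n1 n2) n1
      (fun u => ⟨(u : ℕ × ℕ).1 - 1, by
        have := fst_bounds hn2 hlt u; omega⟩) := by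
  refine ⟨?_, ?_, ?_⟩
  · intro i
    obtain ⟨u, hu⟩ := exists_fst hn2 hlt (m := i.1 + 1) (by omega) (by have := i.2; omega)
    refine ⟨u, ?_⟩
    rw [Fin.ext_iff]
    show (u : ℕ × ℕ).1 - 1 = i.1
    omega
  · rintro e ⟨u, v, w, huv, huw, hvw, rfl, hc1, hc2⟩
    rcases card2 hc1 with h | h | h
    · exact ⟨u, Or.inl rfl, v, Or.inr (Or.inl rfl), huv, Fin.ext (by show _ - 1 = _ - 1; rw [h])⟩
    · exact ⟨u, Or.inl rfl, w, Or.inr (Or.inr rfl), huw, Fin.ext (by show _ - 1 = _ - 1; rw [h])⟩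
    · exact ⟨v, Or.inr (Or.inl rfl), w, Or.inr (Or.inr rfl), hvw,
        Fin.ext (by show _ - 1 = _ - 1; rw [h])⟩
  · rintro e ⟨u, v, rfl, hd1, hd2⟩
    refine ⟨u, Or.inl rfl, v, Or.inr rfl, ne_of_fst hd1, fun hfe => hd1 ?_⟩
    have hval : (u : ℕ × ℕ).1 - 1 = (v : ℕ × ℕ).1 - 1 := congrArg Fin.val hfe
    have b1 := fst_bounds hn2 hlt u
    have b2 := fst_bounds hn2 hlt v
    omega

lemma strict2 (hn2 : 2 ≤ n2) (hlt : n2 < n1) :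
    IsStrictColoring (Hstar2 n1 n2) n2
      (fun u => ⟨(u : ℕ × ℕ).2 - 1, by
        have := snd_bounds hn2 hlt u; omega⟩) := by
  refine ⟨?_, ?_, ?_⟩
  · intro i
    obtain ⟨u, hu⟩ := exists_snd hn2 hlt (m := i.1 + 1) (by omega) (by have := i.2; omega)
    refine ⟨u, ?_⟩
    rw [Fin.ext_iff]
    show (u : ℕ × ℕ).2 - 1 = i.1
    omega
  · rintro e ⟨u, v, w, huv, huw, hvw, rfl, hc1, hc2⟩
    rcases card2 hc2 with h | h | h
    · exact ⟨u, Or.inl rfl, v, Or.inr (Or.inl rfl), huv, Fin.ext (by show _ - 1 = _ - 1; rw [h])⟩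
    · exact ⟨u, Or.inl rfl, w, Or.inr (Or.inr rfl), huw, Fin.ext (by show _ - 1 = _ - 1; rw [h])⟩
    · exact ⟨v, Or.inr (Or.inl rfl), w, Or.inr (Or.inr rfl), hvw,
        Fin.ext (by show _ - 1 = _ - 1; rw [h])⟩
  · rintro e ⟨u, v, rfl, hd1, hd2⟩
    refine ⟨u, Or.inl rfl, v, Or.inr rfl, ne_of_fst hd1, fun hfe => hd2 ?_⟩
    have hval : (u : ℕ × ℕ).2 - 1 = (v : ℕ × ℕ).2 - 1 := congrArg Fin.val hfe
    have b1 := snd_bounds hn2 hlt u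
    have b2 := snd_bounds hn2 hlt v
    omega

lemma main2 (hn2 : 2 ≤ n2) (hlt : n2 < n1) (k : ℕ) (f : Xstar n1 n2 → Fin k)
    (hf : IsStrictColoring (Hstar2 n1 n2) k f) :
    ((k = n1 ∧ ∀ u v : Xstar n1 n2, f u = f v ↔ (u : ℕ × ℕ).1 = (v : ℕ × ℕ).1) ∨
     (k = n2 ∧ ∀ u v : Xstar n1 n2, f u = f v ↔ (u : ℕ × ℕ).2 = (v : ℕ × ℕ).2)) := by
  rcases dichotomy hn2 hlt hf with hiff | hiff
  · exact Or.inl ⟨card_of_proj hf.1 (fun u => (u : ℕ × ℕ).1) hiff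
      (fun u => fst_bounds hn2 hlt u) (fun m hm1 hm2 => exists_fst hn2 hlt hm1 hm2), hiff⟩
  · exact Or.inr ⟨card_of_proj hf.1 (fun u => (u : ℕ × ℕ).2) hiff
      (fun u => snd_bounds hn2 hlt u) (fun m hm1 hm2 => exists_snd hn2 hlt hm1 hm2), hiff⟩

end Final


/-- for `2 ≤ n₂ < n₁`, `H*_{n₁,n₂}` is a one-realization of `{n₁,n₂}`,
and its only strict colorings are the projection to the first coordinate (using
`n₁` colors) and the projection to the second coordinate (using `n₂` colors). -/
theorem Hstar2_one_realization (n1 n2 : ℕ) (h2 : 2 ≤ n2) (hlt : n2 < n1) :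
    IsOneRealization (Hstar2 n1 n2) {n1, n2} ∧
    ∀ (k : ℕ) (f : Xstar n1 n2 → Fin k), IsStrictColoring (Hstar2 n1 n2) k f →
      ((k = n1 ∧ ∀ u v : Xstar n1 n2, f u = f v ↔ (u : ℕ × ℕ).1 = (v : ℕ × ℕ).1) ∨
       (k = n2 ∧ ∀ u v : Xstar n1 n2, f u = f v ↔ (u : ℕ × ℕ).2 = (v : ℕ × ℕ).2)) := by
  refine ⟨⟨?_, ?_⟩, fun k f hf => main2 h2 hlt k f hf⟩
  · ext m
    constructor
    · rintro ⟨f, hf⟩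
      rcases main2 h2 hlt m f hf with ⟨rfl, -⟩ | ⟨rfl, -⟩
      · exact Or.inl rfl
      · exact Or.inr rfl
    · rintro (rfl | rfl)
      · exact ⟨_, strict1 h2 hlt⟩
      · exact ⟨_, strict2 h2 hlt⟩
  · intro k f g hf hg u v
    rcases main2 h2 hlt k f hf with ⟨hk, hF⟩ | ⟨hk, hF⟩ <;>
      rcases main2 h2 hlt k g hg with ⟨hk', hG⟩ | ⟨hk', hG⟩ <;>
      first
        | exact absurd (hk.symm.trans hk') (by omega)
        | rw [hF, hG]
end

section
/- For the mixed hypergraph H*_{n_1,...,n_s} of Construction I with 2 ≤ n_s < ... < n_1, and for each i ∈ [s], the coloring c_i^{s*} assigning to each vertex its i-th coordinate is a strict n_i-coloring of H*_{n_1,...,n_s}. -/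
/-- Vertex set of Construction I: `X* ⊆ [n₁] × ⋯ × [n_s]` consists of the diagonal
vertices `(i,…,i)` for `i ∈ [n_s - 1]`; for each `2 ≤ t ≤ s` and `n_t ≤ j ≤ n_{t-1}-1`
the vertices `(j,…,j,n_t,…,n_s)` and `(j,…,j,1,…,1)` (`j` repeated `t-1` times);
and `(n₁,…,n_s)`.  (Index `t` of the paper corresponds to `t.val + 1` here.) -/
def XstarGen (s : ℕ) (n : Fin s → ℕ) : Set (Fin s → ℕ) :=
  {x | (∃ last : Fin s, (last : ℕ) + 1 = s ∧ ∃ i, 1 ≤ i ∧ i + 1 ≤ n last ∧ ∀ k, x k = i) ∨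
       (∃ t u : Fin s, (u : ℕ) + 1 = (t : ℕ) ∧ ∃ j, n t ≤ j ∧ j + 1 ≤ n u ∧
         ((∀ k : Fin s, ((k : ℕ) < (t : ℕ) → x k = j) ∧ ((t : ℕ) ≤ (k : ℕ) → x k = n k)) ∨
          (∀ k : Fin s, ((k : ℕ) < (t : ℕ) → x k = j) ∧ ((t : ℕ) ≤ (k : ℕ) → x k = 1)))) ∨
       (∀ k, x k = n k)}

/-- The Construction-I mixed hypergraph on a vertex set `X` of `s`-tuples:
D-edges are pairs of vertices differing in every coordinate, and C-edges are
triples of distinct vertices such that every coordinate takes exactly two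
distinct values among the three. -/
def HstarOn {s : ℕ} (X : Set (Fin s → ℕ)) : MixedHypergraph X where
  Cedges := {e | ∃ u v w : X, u ≠ v ∧ u ≠ w ∧ v ≠ w ∧ e = {u, v, w} ∧
    ∀ k : Fin s, ({(u : Fin s → ℕ) k, (v : Fin s → ℕ) k, (w : Fin s → ℕ) k} : Finset ℕ).card = 2}
  Dedges := {e | ∃ u v : X, e = {u, v} ∧ ∀ k : Fin s, (u : Fin s → ℕ) k ≠ (v : Fin s → ℕ) k}

/-!
Colouring a vertex by its `i`-th coordinate respects every D-edge (its two vertices differ in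
every coordinate) and every C-edge (three values from a two-element set must repeat), whatever
the vertex set. It remains to see that the `i`-th coordinates of vertices of `X*` fill exactly
`[n_i]`: they are bounded by `n_i` because `n` is decreasing, and a value `v ∈ [n_i]` is taken
by `(n_1, …, n_s)` if `v = n_i`, by a diagonal vertex if `v < n_s`, and otherwise by
`(v, …, v, 1, …, 1)`, switching to `1` at the first index `t` with `n_t ≤ v`.
-/

theorem Fin.exists_not_and_succ_of_le {s : ℕ} {P : Fin s → Prop} {i j : Fin s} (hij : i ≤ j)
    (hi : ¬P i) (hj : P j) : ∃ u t : Fin s, (u : ℕ) + 1 = t ∧ i ≤ u ∧ ¬P u ∧ P t := by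
  obtain ⟨m, hm, hm_succ, hP⟩ := Nat.exists_not_and_succ_of_not_zero_of_exists
    (p := fun m => ∃ h : (i : ℕ) + m < s, P ⟨i + m, h⟩) (by simpa using hi)
    ⟨j - i, by omega, by simpa [Nat.add_sub_cancel' (Fin.le_def.mp hij)] using hj⟩
  exact ⟨⟨i + m, by omega⟩, ⟨i + (m + 1), hm_succ⟩, by simp only; omega,
    Fin.le_def.mpr (by simp), fun hu => hm ⟨_, hu⟩, hP⟩

namespace HstarOn

variable {s : ℕ} {X : Set (Fin s → ℕ)}

theorem exists_apply_eq_of_mem_Cedges (i : Fin s) {e : Set X} (he : e ∈ (HstarOn X).Cedges) :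
    ∃ u ∈ e, ∃ v ∈ e, u ≠ v ∧ (u : Fin s → ℕ) i = (v : Fin s → ℕ) i := by
  obtain ⟨a, b, c, hab, hac, hbc, rfl, hcard⟩ := he
  by_contra! hne
  have h3 := Finset.card_eq_three.mpr ⟨_, _, _, hne a (by simp) b (by simp) hab,
    hne a (by simp) c (by simp) hac, hne b (by simp) c (by simp) hbc, rfl⟩
  exact absurd (hcard i) (by omega)

theorem exists_apply_ne_of_mem_Dedges (i : Fin s) {e : Set X} (he : e ∈ (HstarOn X).Dedges) :
    ∃ u ∈ e, ∃ v ∈ e, u ≠ v ∧ (u : Fin s → ℕ) i ≠ (v : Fin s → ℕ) i := by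
  obtain ⟨u, v, rfl, hne⟩ := he
  exact ⟨u, by simp, v, by simp, fun h => hne i (by rw [h]), hne i⟩

theorem isStrictColoring_iff_surjective {k : ℕ} (i : Fin s) (f : X → Fin k)
    (hf : ∀ u v, f u = f v ↔ (u : Fin s → ℕ) i = (v : Fin s → ℕ) i) :
    IsStrictColoring (HstarOn X) k f ↔ Function.Surjective f := by
  refine ⟨fun h => h.1, fun hsurj => ⟨hsurj, fun e he => ?_, fun e he => ?_⟩⟩
  · obtain ⟨u, hu, v, hv, huv, hi⟩ := exists_apply_eq_of_mem_Cedges i he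
    exact ⟨u, hu, v, hv, huv, (hf u v).2 hi⟩
  · obtain ⟨u, hu, v, hv, huv, hi⟩ := exists_apply_ne_of_mem_Dedges i he
    exact ⟨u, hu, v, hv, huv, mt (hf u v).1 hi⟩

end HstarOn

section XstarGen

variable {s : ℕ} {n : Fin s → ℕ}

theorem one_le_and_le_of_mem_XstarGen (hn : Antitone n) (hpos : ∀ k, 0 < n k) {x : Fin s → ℕ}
    (hx : x ∈ XstarGen s n) (k : Fin s) : 1 ≤ x k ∧ x k ≤ n k := by
  rcases hx with ⟨l, hl, j, hj1, hjl, hx⟩ | ⟨t, u, hut, j, hjt, hju, hx⟩ | hx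
  · have : n l ≤ n k := hn (Fin.le_def.mpr (by omega))
    rw [hx k]; omega
  · have hk_lt : (k : ℕ) < t → x k = j := by rcases hx with hx | hx <;> exact (hx k).1
    have hk_ge : (t : ℕ) ≤ k → x k = n k ∨ x k = 1 := by
      rcases hx with hx | hx
      exacts [fun hkt => .inl ((hx k).2 hkt), fun hkt => .inr ((hx k).2 hkt)]
    rcases lt_or_ge (k : ℕ) t with hkt | hkt
    · have : n u ≤ n k := hn (Fin.le_def.mpr (by omega))
      have := hpos t
      rw [hk_lt hkt]; omega
    · have := hpos k
      rcases hk_ge hkt with h | h <;> rw [h] <;> omega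
  · rw [hx k]; exact ⟨hpos k, le_rfl⟩

theorem exists_mem_XstarGen_apply_eq (i : Fin s) {v : ℕ} (hv : 1 ≤ v) (hvi : v ≤ n i) :
    ∃ x ∈ XstarGen s n, x i = v := by
  have hs : 0 < s := i.pos
  let last : Fin s := ⟨s - 1, by omega⟩
  rcases hvi.eq_or_lt with rfl | hvi
  · exact ⟨n, Or.inr (Or.inr fun _ => rfl), rfl⟩
  rcases lt_or_ge v (n last) with hv_last | hv_last
  · exact ⟨fun _ => v,
      Or.inl ⟨last, show s - 1 + 1 = s by omega, v, hv, hv_last, fun _ => rfl⟩, rfl⟩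
  obtain ⟨u, t, hut, hiu, hvu, hvt⟩ := Fin.exists_not_and_succ_of_le (P := fun k => n k ≤ v)
    (Fin.le_def.mpr (by omega : (i : ℕ) ≤ s - 1)) hvi.not_ge hv_last
  refine ⟨fun k => if (k : ℕ) < t then v else 1,
    Or.inr (Or.inl ⟨t, u, hut, v, hvt, not_le.mp hvu,
      Or.inr fun k => ⟨fun hk => if_pos hk, fun hk => if_neg (by omega)⟩⟩), if_pos ?_⟩
  exact lt_of_le_of_lt (Fin.le_def.mp hiu) (by omega)

end XstarGen

/-- for each `i`, the coloring of `H*_{n₁,…,n_s}` assigning to each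
vertex its `i`-th coordinate is a strict `n_i`-coloring (colors `[n_i]` are
identified with `Fin (n i)` via `c ↦ c + 1`). -/
theorem coordinate_coloring_strict (s : ℕ) (hs : 0 < s) (n : Fin s → ℕ)
    (hanti : StrictAnti n) (h2 : 2 ≤ n ⟨s - 1, by omega⟩) (i : Fin s) :
    ∃ f : XstarGen s n → Fin (n i),
      IsStrictColoring (HstarOn (XstarGen s n)) (n i) f ∧
      ∀ x : XstarGen s n, ((f x : ℕ) + 1 = (x : Fin s → ℕ) i) := by
  have hpos (k : Fin s) : 0 < n k :=
    have hk_last : (k : ℕ) ≤ s - 1 := by omega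
    lt_of_lt_of_le (by omega) (h2.trans (hanti.antitone (Fin.le_def.mpr hk_last)))
  have hrange (x : XstarGen s n) := one_le_and_le_of_mem_XstarGen hanti.antitone hpos x.2 i
  let f (x : XstarGen s n) : Fin (n i) :=
    ⟨(x : Fin s → ℕ) i - 1, by have := hrange x; omega⟩
  have hf (x : XstarGen s n) : (f x : ℕ) + 1 = (x : Fin s → ℕ) i := by
    have := hrange x; simp only [f]; omega
  refine ⟨f, (HstarOn.isStrictColoring_iff_surjective i f fun u v => ?_).2 fun c => ?_, hf⟩
  · rw [Fin.ext_iff]; have := hf u; have := hf v; omega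
  · obtain ⟨x, hx, hxi⟩ := exists_mem_XstarGen_apply_eq i (Nat.le_add_left 1 c) c.isLt
    exact ⟨⟨x, hx⟩, Fin.ext (by have h := hf ⟨x, hx⟩; dsimp only at h; omega)⟩
end

section
/- In the mixed hypergraph H*_{n_1,n_2} (with 2 ≤ n_2 < n_1), for any strict coloring c in which the vertices (i,i), i ∈ [n_2 - 1], receive distinct colors 1,...,n_2-1 respectively and (n_2,1) receives color n_2 distinct from all of these, it follows by induction along j = 1, ..., n_1 - n_2 - 1 that (n_2 + j, n_2) and (n_2 + j, 1) receive a new common color n_2 + j, and (n_1, n_2) receives color n_1; hence c is the coloring by first coordinate using n_1 colors. -/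
/-- in `H*_{n₁,n₂}` with `2 ≤ n₂ < n₁`, any strict coloring in which
the diagonal vertices `(i,i)`, `i ∈ [n₂-1]`, receive pairwise distinct colors and
`(n₂,1)` receives a color distinct from all of them is the coloring by the first
coordinate, using `n₁` colors. -/
theorem Hstar2_first_coordinate_coloring (n1 n2 : ℕ) (h2 : 2 ≤ n2) (hlt : n2 < n1)
    (k : ℕ) (f : Xstar n1 n2 → Fin k) (hf : IsStrictColoring (Hstar2 n1 n2) k f)
    (hdiag : ∀ u v : Xstar n1 n2,
      (u : ℕ × ℕ).1 = (u : ℕ × ℕ).2 → (u : ℕ × ℕ).1 + 1 ≤ n2 →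
      (v : ℕ × ℕ).1 = (v : ℕ × ℕ).2 → (v : ℕ × ℕ).1 + 1 ≤ n2 → u ≠ v → f u ≠ f v)
    (hsep : ∀ u v : Xstar n1 n2,
      (u : ℕ × ℕ).1 = (u : ℕ × ℕ).2 → (u : ℕ × ℕ).1 + 1 ≤ n2 →
      (v : ℕ × ℕ) = (n2, 1) → f u ≠ f v) :
    k = n1 ∧ ∀ u v : Xstar n1 n2, f u = f v ↔ (u : ℕ × ℕ).1 = (v : ℕ × ℕ).1 := by
  classical
  -- membership facts
  have mem11 : ((1,1) : ℕ×ℕ) ∈ Xstar n1 n2 := Or.inl ⟨rfl, le_refl 1, by omega⟩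
  have memD : ∀ i, 1 ≤ i → i + 1 ≤ n2 → ((i,i):ℕ×ℕ) ∈ Xstar n1 n2 :=
    fun i h1 hb => Or.inl ⟨rfl, h1, hb⟩
  have memN : ∀ j, n2 ≤ j → j + 1 ≤ n1 → ((j,n2):ℕ×ℕ) ∈ Xstar n1 n2 :=
    fun j a b => Or.inr (Or.inl ⟨a, b, Or.inl rfl⟩)
  have mem1 : ∀ j, n2 ≤ j → j + 1 ≤ n1 → ((j,1):ℕ×ℕ) ∈ Xstar n1 n2 :=
    fun j a b => Or.inr (Or.inl ⟨a, b, Or.inr rfl⟩)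
  have memT : ((n1,n2):ℕ×ℕ) ∈ Xstar n1 n2 := Or.inr (Or.inr rfl)
  -- classification of vertices
  have classify : ∀ u : Xstar n1 n2,
      ((u:ℕ×ℕ).2 = (u:ℕ×ℕ).1 ∧ 1 ≤ (u:ℕ×ℕ).1 ∧ (u:ℕ×ℕ).1 + 1 ≤ n2) ∨
      (n2 ≤ (u:ℕ×ℕ).1 ∧ (u:ℕ×ℕ).1 + 1 ≤ n1 ∧ ((u:ℕ×ℕ).2 = n2 ∨ (u:ℕ×ℕ).2 = 1)) ∨
      ((u:ℕ×ℕ).1 = n1 ∧ (u:ℕ×ℕ).2 = n2) := by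
    rintro ⟨⟨a,b⟩, hu⟩
    simp only [Xstar, Set.mem_setOf_eq, Prod.mk.injEq] at hu
    rcases hu with ⟨hx,hy,hz⟩ | ⟨hx,hy,hz⟩ | ⟨hx,hy⟩
    · exact Or.inl ⟨hx.symm, hy, hz⟩
    · exact Or.inr (Or.inl ⟨hx, hy, hz⟩)
    · exact Or.inr (Or.inr ⟨hx, hy⟩)
  have bound : ∀ u : Xstar n1 n2, 1 ≤ (u:ℕ×ℕ).1 ∧ (u:ℕ×ℕ).1 ≤ n1 := by
    intro u
    rcases classify u with ⟨h1',h2',h3'⟩|⟨h1',h2',h3'⟩|⟨h1',h2'⟩ <;> omega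
  -- D-edge consequence
  have hD : ∀ u v : Xstar n1 n2, (u:ℕ×ℕ).1 ≠ (v:ℕ×ℕ).1 → (u:ℕ×ℕ).2 ≠ (v:ℕ×ℕ).2 →
      f u ≠ f v := by
    intro u v ha hb hfe
    obtain ⟨x, hx, y, hy, hxy, hfxy⟩ := hf.2.2 {u,v} ⟨u, v, rfl, ha, hb⟩
    simp only [Set.mem_insert_iff, Set.mem_singleton_iff] at hx hy
    rcases hx with rfl|rfl <;> rcases hy with rfl|rfl <;>
      first | exact hxy rfl | exact hfxy hfe | exact hfxy hfe.symm
  -- C-edge consequence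
  have hC : ∀ u v w : Xstar n1 n2, u ≠ v → u ≠ w → v ≠ w →
      ({(u:ℕ×ℕ).1,(v:ℕ×ℕ).1,(w:ℕ×ℕ).1} : Finset ℕ).card = 2 →
      ({(u:ℕ×ℕ).2,(v:ℕ×ℕ).2,(w:ℕ×ℕ).2} : Finset ℕ).card = 2 →
      f u = f v ∨ f u = f w ∨ f v = f w := by
    intro u v w huv huw hvw hc1 hc2
    obtain ⟨x, hx, y, hy, hxy, hfxy⟩ :=
      hf.2.1 {u,v,w} ⟨u, v, w, huv, huw, hvw, rfl, hc1, hc2⟩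
    simp only [Set.mem_insert_iff, Set.mem_singleton_iff] at hx hy
    rcases hx with rfl|rfl|rfl <;> rcases hy with rfl|rfl|rfl <;>
      first
        | exact absurd rfl hxy
        | exact Or.inl hfxy
        | exact Or.inl hfxy.symm
        | exact Or.inr (Or.inl hfxy)
        | exact Or.inr (Or.inl hfxy.symm)
        | exact Or.inr (Or.inr hfxy)
        | exact Or.inr (Or.inr hfxy.symm)
  -- cardinality helpers
  have card2a : ∀ a b : ℕ, a ≠ b → ({a, a, b} : Finset ℕ).card = 2 := by
    intro a b h
    rw [show ({a,a,b} : Finset ℕ) = {a,b} by ext x; simp]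
    exact Finset.card_pair h
  have card2b : ∀ a b : ℕ, a ≠ b → ({a, b, b} : Finset ℕ).card = 2 := by
    intro a b h
    rw [show ({a,b,b} : Finset ℕ) = {a,b} by ext x; simp [or_comm]]
    exact Finset.card_pair h
  have neMk : ∀ (p q : ℕ×ℕ) (hp : p ∈ Xstar n1 n2) (hq : q ∈ Xstar n1 n2), p ≠ q →
      (⟨p,hp⟩ : Xstar n1 n2) ≠ ⟨q,hq⟩ := by
    intro p q hp hq h hh
    exact h (congrArg Subtype.val hh)
  -- the key lemma: the two vertices in each column get the same color
  have hAB : ∀ j (hj1 : n2 ≤ j) (hj2 : j + 1 ≤ n1),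
      f ⟨(j,n2), memN j hj1 hj2⟩ = f ⟨(j,1), mem1 j hj1 hj2⟩ := by
    intro j hj1 hj2
    by_contra hne
    have step1 : f (⟨(j,1), mem1 j hj1 hj2⟩ : Xstar n1 n2) = f ⟨(1,1), mem11⟩ := by
      rcases hC ⟨(j,n2), memN j hj1 hj2⟩ ⟨(j,1), mem1 j hj1 hj2⟩ ⟨(1,1), mem11⟩
        (neMk _ _ _ _ (by intro hh; rw [Prod.mk.injEq] at hh; omega))
        (neMk _ _ _ _ (by intro hh; rw [Prod.mk.injEq] at hh; omega))
        (neMk _ _ _ _ (by intro hh; rw [Prod.mk.injEq] at hh; omega))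
        (card2a j 1 (by omega)) (card2b n2 1 (by omega)) with h|h|h
      · exact absurd h hne
      · exact absurd h (hD _ _ (show j ≠ 1 by omega) (show n2 ≠ 1 by omega))
      · exact h
    by_cases hj : j = n2
    · exact hsep ⟨(1,1), mem11⟩ ⟨(j,1), mem1 j hj1 hj2⟩ rfl h2
        (show ((j,1):ℕ×ℕ) = ((n2,1):ℕ×ℕ) by rw [hj]) step1.symm
    · have step2 : f (⟨(j,1), mem1 j hj1 hj2⟩ : Xstar n1 n2)
          = f ⟨(n2,1), mem1 n2 le_rfl (by omega)⟩ := by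
        rcases hC ⟨(j,n2), memN j hj1 hj2⟩ ⟨(j,1), mem1 j hj1 hj2⟩
          ⟨(n2,1), mem1 n2 le_rfl (by omega)⟩
          (neMk _ _ _ _ (by intro hh; rw [Prod.mk.injEq] at hh; omega))
          (neMk _ _ _ _ (by intro hh; rw [Prod.mk.injEq] at hh; omega))
          (neMk _ _ _ _ (by intro hh; rw [Prod.mk.injEq] at hh; omega))
          (card2a j n2 hj) (card2b n2 1 (by omega)) with h|h|h
        · exact absurd h hne
        · exact absurd h (hD _ _ (show j ≠ n2 from hj) (show n2 ≠ 1 by omega))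
        · exact h
      exact hsep ⟨(1,1), mem11⟩ ⟨(n2,1), mem1 n2 le_rfl (by omega)⟩ rfl h2 rfl
        (step1.symm.trans step2)
  -- same first coordinate implies same color
  have keyR : ∀ u v : Xstar n1 n2, (u:ℕ×ℕ).1 = (v:ℕ×ℕ).1 → f u = f v := by
    intro u v h
    by_cases h2' : (u:ℕ×ℕ).2 = (v:ℕ×ℕ).2
    · have : u = v := Subtype.ext (Prod.ext h h2')
      rw [this]
    · rcases classify u with ⟨hu1,hu2,hu3⟩|⟨hu1,hu2,hu3⟩|⟨hu1,hu2⟩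
      · exfalso
        rcases classify v with ⟨hv1,hv2,hv3⟩|⟨hv1,hv2,hv3⟩|⟨hv1,hv2⟩
        · exact h2' (by omega)
        · omega
        · omega
      · rcases classify v with ⟨hv1,hv2,hv3⟩|⟨hv1,hv2,hv3⟩|⟨hv1,hv2⟩
        · exfalso; omega
        · rcases hu3 with hu3|hu3 <;> rcases hv3 with hv3|hv3
          · exact absurd (by omega) h2'
          · have hu' : u = ⟨((u:ℕ×ℕ).1, n2), memN _ hu1 hu2⟩ :=
              Subtype.ext (Prod.ext rfl hu3)
            have hv' : v = ⟨((u:ℕ×ℕ).1, 1), mem1 _ hu1 hu2⟩ :=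
              Subtype.ext (Prod.ext h.symm hv3)
            rw [hu', hv']; exact hAB _ hu1 hu2
          · have hu' : u = ⟨((u:ℕ×ℕ).1, 1), mem1 _ hu1 hu2⟩ :=
              Subtype.ext (Prod.ext rfl hu3)
            have hv' : v = ⟨((u:ℕ×ℕ).1, n2), memN _ hu1 hu2⟩ :=
              Subtype.ext (Prod.ext h.symm hv3)
            rw [hu', hv']; exact (hAB _ hu1 hu2).symm
          · exact absurd (by omega) h2'
        · exfalso; omega
      · rcases classify v with ⟨hv1,hv2,hv3⟩|⟨hv1,hv2,hv3⟩|⟨hv1,hv2⟩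
        · exfalso; omega
        · exfalso; omega
        · exact absurd (by omega) h2'
  -- different first coordinates, same second coordinate, second vertex in middle
  have main : ∀ u v : Xstar n1 n2, (u:ℕ×ℕ).1 ≠ (v:ℕ×ℕ).1 → (u:ℕ×ℕ).2 = (v:ℕ×ℕ).2 →
      n2 ≤ (v:ℕ×ℕ).1 → (v:ℕ×ℕ).1 + 1 ≤ n1 → ((v:ℕ×ℕ).2 = n2 ∨ (v:ℕ×ℕ).2 = 1) →
      f u ≠ f v := by
    intro u v h h2' hb1 hb2 hc
    rcases hc with hc|hc
    · have hv' : v = (⟨((v:ℕ×ℕ).1, n2), memN _ hb1 hb2⟩ : Xstar n1 n2) :=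
        Subtype.ext (Prod.ext rfl hc)
      have hval : f v = f (⟨((v:ℕ×ℕ).1, 1), mem1 _ hb1 hb2⟩ : Xstar n1 n2) :=
        (congrArg f hv').trans (hAB _ hb1 hb2)
      rw [hval]
      exact hD u _ h (show (u:ℕ×ℕ).2 ≠ 1 by omega)
    · have hv' : v = (⟨((v:ℕ×ℕ).1, 1), mem1 _ hb1 hb2⟩ : Xstar n1 n2) :=
        Subtype.ext (Prod.ext rfl hc)
      have hval : f v = f (⟨((v:ℕ×ℕ).1, n2), memN _ hb1 hb2⟩ : Xstar n1 n2) :=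
        (congrArg f hv').trans (hAB _ hb1 hb2).symm
      rw [hval]
      exact hD u _ h (show (u:ℕ×ℕ).2 ≠ n2 by omega)
  -- different first coordinates imply different colors
  have keyL : ∀ u v : Xstar n1 n2, (u:ℕ×ℕ).1 ≠ (v:ℕ×ℕ).1 → f u ≠ f v := by
    intro u v h
    by_cases h2' : (u:ℕ×ℕ).2 = (v:ℕ×ℕ).2
    · rcases classify v with ⟨hv1,hv2,hv3⟩|⟨hv1,hv2,hv3⟩|⟨hv1,hv2⟩
      · rcases classify u with ⟨hu1,hu2,hu3⟩|⟨hu1,hu2,hu3⟩|⟨hu1,hu2⟩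
        · exact absurd (show (u:ℕ×ℕ).1 = (v:ℕ×ℕ).1 by omega) h
        · exact (main v u (Ne.symm h) h2'.symm hu1 hu2 hu3).symm
        · exact absurd h2' (by omega)
      · exact main u v h h2' hv1 hv2 hv3
      · rcases classify u with ⟨hu1,hu2,hu3⟩|⟨hu1,hu2,hu3⟩|⟨hu1,hu2⟩
        · exact absurd h2' (by omega)
        · exact (main v u (Ne.symm h) h2'.symm hu1 hu2 hu3).symm
        · exact absurd (show (u:ℕ×ℕ).1 = (v:ℕ×ℕ).1 by omega) h
    · exact hD u v h h2'
  have key : ∀ u v : Xstar n1 n2, f u = f v ↔ (u:ℕ×ℕ).1 = (v:ℕ×ℕ).1 := fun u v =>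
    ⟨fun hfe => by_contra fun hne => keyL u v hne hfe, keyR u v⟩
  -- existence of a vertex with each first coordinate
  have exist_vert : ∀ m, 1 ≤ m → m ≤ n1 → ∃ u : Xstar n1 n2, (u:ℕ×ℕ).1 = m := by
    intro m hm1 hm2
    by_cases hA : m + 1 ≤ n2
    · exact ⟨⟨(m,m), memD m hm1 hA⟩, rfl⟩
    · by_cases hB : m + 1 ≤ n1
      · exact ⟨⟨(m,n2), memN m (by omega) hB⟩, rfl⟩
      · exact ⟨⟨(n1,n2), memT⟩, show n1 = m by omega⟩
  -- counting: k = n1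
  have hle1 : k ≤ n1 := by
    have inj : Function.Injective (fun c : Fin k =>
        (⟨((Classical.choose (hf.1 c) : Xstar n1 n2) : ℕ×ℕ).1,
          Finset.mem_Icc.mpr (bound _)⟩ : (Finset.Icc 1 n1 : Finset ℕ))) := by
      intro c c' hcc
      rw [Subtype.mk_eq_mk] at hcc
      have h1 := Classical.choose_spec (hf.1 c)
      have h2'' := Classical.choose_spec (hf.1 c')
      have := (key _ _).mpr hcc
      rw [h1, h2''] at this
      exact this
    have := Fintype.card_le_of_injective _ inj
    simp only [Fintype.card_fin, Fintype.card_coe, Nat.card_Icc] at this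
    omega
  have hle2 : n1 ≤ k := by
    have inj : Function.Injective (fun m : (Finset.Icc 1 n1 : Finset ℕ) =>
        f (Classical.choose (exist_vert m.1 (Finset.mem_Icc.mp m.2).1
          (Finset.mem_Icc.mp m.2).2))) := by
      intro m m' hmm
      have h1 := Classical.choose_spec (exist_vert m.1 (Finset.mem_Icc.mp m.2).1
        (Finset.mem_Icc.mp m.2).2)
      have h2'' := Classical.choose_spec (exist_vert m'.1 (Finset.mem_Icc.mp m'.2).1
        (Finset.mem_Icc.mp m'.2).2)
      have := (key _ _).mp hmm
      rw [h1, h2''] at this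
      exact Subtype.ext this
    have := Fintype.card_le_of_injective _ inj
    simp only [Fintype.card_fin, Fintype.card_coe, Nat.card_Icc] at this
    omega
  exact ⟨by omega, key⟩
end

section
/- In the mixed hypergraph H*_{n_1,n_2} (with 2 ≤ n_2 < n_1), any strict coloring in which (n_2, 1) receives the same color as (1,1) must color (n_2 + j, 1) with the color of (1,1) and (n_2 + j, n_2) with the color of (n_2, n_2) for all j, and (n_1, n_2) with the color of (n_2, n_2); hence the coloring is the projection to the second coordinate, using exactly n_2 colors. -/
-- auxiliary lemmas
lemma memX (n1 n2 : ℕ) (p : ℕ × ℕ) : p ∈ Xstar n1 n2 ↔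
    ((p.1 = p.2 ∧ 1 ≤ p.1 ∧ p.1 + 1 ≤ n2) ∨
     (n2 ≤ p.1 ∧ p.1 + 1 ≤ n1 ∧ (p.2 = n2 ∨ p.2 = 1)) ∨
     (p.1 = n1 ∧ p.2 = n2)) := by
  simp [Xstar, Prod.ext_iff]

lemma card_aab {a b : ℕ} (h : a ≠ b) : ({a, a, b} : Finset ℕ).card = 2 := by
  rw [show ({a,a,b} : Finset ℕ) = {a,b} by aesop]
  exact Finset.card_pair h

lemma card_abb {a b : ℕ} (h : a ≠ b) : ({a, b, b} : Finset ℕ).card = 2 := by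
  rw [show ({a,b,b} : Finset ℕ) = {a,b} by aesop]
  exact Finset.card_pair h

lemma card_aba {a b : ℕ} (h : a ≠ b) : ({a, b, a} : Finset ℕ).card = 2 := by
  rw [show ({a,b,a} : Finset ℕ) = {a,b} by aesop]
  exact Finset.card_pair h

lemma D_neq {n1 n2 k : ℕ} {f : Xstar n1 n2 → Fin k}
    (hf : IsStrictColoring (Hstar2 n1 n2) k f) (u v : Xstar n1 n2)
    (h1 : (u : ℕ × ℕ).1 ≠ (v : ℕ × ℕ).1) (h2 : (u : ℕ × ℕ).2 ≠ (v : ℕ × ℕ).2) :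
    f u ≠ f v := by
  obtain ⟨-, -, hD⟩ := hf
  obtain ⟨a, ha, b, hb, hab, hfab⟩ := hD {u, v} ⟨u, v, rfl, h1, h2⟩
  simp only [Set.mem_insert_iff, Set.mem_singleton_iff] at ha hb
  rcases ha with rfl | rfl <;> rcases hb with rfl | rfl <;>
    first
      | exact absurd rfl hab
      | exact hfab
      | exact Ne.symm hfab

lemma C_mono {n1 n2 k : ℕ} {f : Xstar n1 n2 → Fin k}
    (hf : IsStrictColoring (Hstar2 n1 n2) k f) (u v w : Xstar n1 n2)
    (huv : u ≠ v) (huw : u ≠ w) (hvw : v ≠ w)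
    (hc1 : ({(u : ℕ × ℕ).1, (v : ℕ × ℕ).1, (w : ℕ × ℕ).1} : Finset ℕ).card = 2)
    (hc2 : ({(u : ℕ × ℕ).2, (v : ℕ × ℕ).2, (w : ℕ × ℕ).2} : Finset ℕ).card = 2) :
    f u = f v ∨ f u = f w ∨ f v = f w := by
  obtain ⟨-, hC, -⟩ := hf
  obtain ⟨a, ha, b, hb, hab, hfab⟩ := hC {u, v, w} ⟨u, v, w, huv, huw, hvw, rfl, hc1, hc2⟩
  simp only [Set.mem_insert_iff, Set.mem_singleton_iff] at ha hb
  rcases ha with rfl | rfl | rfl <;> rcases hb with rfl | rfl | rfl <;>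
    first
      | exact absurd rfl hab
      | exact Or.inl hfab
      | exact Or.inl hfab.symm
      | exact Or.inr (Or.inl hfab)
      | exact Or.inr (Or.inl hfab.symm)
      | exact Or.inr (Or.inr hfab)
      | exact Or.inr (Or.inr hfab.symm)

/-- in `H*_{n₁,n₂}` with `2 ≤ n₂ < n₁`, any strict coloring giving
`(n₂,1)` the same color as `(1,1)` is the projection to the second coordinate,
using exactly `n₂` colors; in particular each `(n₂+j,1)` gets the color of `(1,1)`
and each `(n₂+j,n₂)` and `(n₁,n₂)` get the color of `(n₂,n₂)`. -/
theorem Hstar2_second_coordinate_coloring (n1 n2 : ℕ) (h2 : 2 ≤ n2) (hlt : n2 < n1)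
    (k : ℕ) (f : Xstar n1 n2 → Fin k) (hf : IsStrictColoring (Hstar2 n1 n2) k f)
    (hmerge : ∀ u v : Xstar n1 n2,
      (u : ℕ × ℕ) = (n2, 1) → (v : ℕ × ℕ) = (1, 1) → f u = f v) :
    k = n2 ∧ ∀ u v : Xstar n1 n2, f u = f v ↔ (u : ℕ × ℕ).2 = (v : ℕ × ℕ).2 := by
  have h11 : ((1, 1) : ℕ × ℕ) ∈ Xstar n1 n2 := by simp [Xstar]; omega
  have hnn : ((n2, n2) : ℕ × ℕ) ∈ Xstar n1 n2 := by simp [Xstar]; omega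
  let v11 : Xstar n1 n2 := ⟨(1, 1), h11⟩
  let vnn : Xstar n1 n2 := ⟨(n2, n2), hnn⟩
  have hne : f vnn ≠ f v11 := D_neq hf vnn v11 (by show n2 ≠ 1; omega) (by show n2 ≠ 1; omega)
  have key : ∀ m, n2 ≤ m →
      (∀ h : ((m, n2) : ℕ × ℕ) ∈ Xstar n1 n2, f ⟨(m, n2), h⟩ = f vnn) ∧
      (∀ h : ((m, 1) : ℕ × ℕ) ∈ Xstar n1 n2, f ⟨(m, 1), h⟩ = f v11) := by
    intro m hm
    induction m, hm using Nat.le_induction with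
    | base => exact ⟨fun h => rfl, fun h => hmerge _ _ rfl rfl⟩
    | succ m hm ih =>
      constructor
      · intro h
        have hb1 : m + 1 ≤ n1 := by
          have := (memX n1 n2 (m + 1, n2)).mp h; simp at this; omega
        have hbm : ((m, 1) : ℕ × ℕ) ∈ Xstar n1 n2 := by simp [Xstar]; omega
        have htm : ((m, n2) : ℕ × ℕ) ∈ Xstar n1 n2 := by simp [Xstar]; omega
        have hfb : f ⟨(m, 1), hbm⟩ = f v11 := ih.2 hbm
        have hft : f ⟨(m, n2), htm⟩ = f vnn := ih.1 htm
        have hmono := C_mono hf ⟨(m, 1), hbm⟩ ⟨(m, n2), htm⟩ ⟨(m + 1, n2), h⟩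
          (by simp [Subtype.ext_iff, Prod.ext_iff]; try omega)
          (by simp [Subtype.ext_iff, Prod.ext_iff]; try omega)
          (by simp [Subtype.ext_iff, Prod.ext_iff]; try omega)
          (card_aab (show m ≠ m + 1 by omega)) (card_abb (show 1 ≠ n2 by omega))
        rcases hmono with hmono | hmono | hmono
        · rw [hfb, hft] at hmono; exact absurd hmono.symm hne
        · exact absurd hmono (D_neq hf _ _ (by show m ≠ m + 1; omega) (by show 1 ≠ n2; omega))
        · rw [← hmono]; exact hft
      · intro h
        have hb1 : m + 2 ≤ n1 := by
          have := (memX n1 n2 (m + 1, 1)).mp h; simp at this; omega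
        have hbm : ((m, 1) : ℕ × ℕ) ∈ Xstar n1 n2 := by simp [Xstar]; omega
        have htm : ((m, n2) : ℕ × ℕ) ∈ Xstar n1 n2 := by simp [Xstar]; omega
        have hfb : f ⟨(m, 1), hbm⟩ = f v11 := ih.2 hbm
        have hft : f ⟨(m, n2), htm⟩ = f vnn := ih.1 htm
        have hmono := C_mono hf ⟨(m, 1), hbm⟩ ⟨(m, n2), htm⟩ ⟨(m + 1, 1), h⟩
          (by simp [Subtype.ext_iff, Prod.ext_iff]; try omega)
          (by simp [Subtype.ext_iff, Prod.ext_iff]; try omega)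
          (by simp [Subtype.ext_iff, Prod.ext_iff]; try omega)
          (card_aab (show m ≠ m + 1 by omega)) (card_aba (show 1 ≠ n2 by omega))
        rcases hmono with hmono | hmono | hmono
        · rw [hfb, hft] at hmono; exact absurd hmono.symm hne
        · rw [← hmono]; exact hfb
        · exact absurd hmono (D_neq hf _ _ (by show m ≠ m + 1; omega) (by show n2 ≠ 1; omega))
  have class_bot : ∀ u : Xstar n1 n2, (u : ℕ × ℕ).2 = 1 → f u = f v11 := by
    intro u hu
    obtain ⟨⟨a, b⟩, hp⟩ := u
    simp only at hu
    subst hu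
    have hmm := (memX n1 n2 (a, 1)).mp hp
    simp at hmm
    rcases Nat.lt_or_ge a n2 with hc | hc
    · have ha : a = 1 := by omega
      subst ha; rfl
    · exact (key a hc).2 hp
  have class_top : ∀ u : Xstar n1 n2, (u : ℕ × ℕ).2 = n2 → f u = f vnn := by
    intro u hu
    obtain ⟨⟨a, b⟩, hp⟩ := u
    simp only at hu
    have hmm := (memX n1 n2 (a, b)).mp hp
    simp at hmm
    have hc : n2 ≤ a := by omega
    have hp' : ((a, n2) : ℕ × ℕ) ∈ Xstar n1 n2 := hu ▸ hp
    have he : (⟨(a, b), hp⟩ : Xstar n1 n2) = ⟨(a, n2), hp'⟩ := Subtype.ext (by simp [hu])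
    rw [he]
    exact (key a hc).1 hp'
  have main : ∀ u v : Xstar n1 n2, f u = f v ↔ (u : ℕ × ℕ).2 = (v : ℕ × ℕ).2 := by
    intro u v
    constructor
    · intro hfe
      by_contra hsne
      rcases eq_or_ne (u : ℕ × ℕ).1 (v : ℕ × ℕ).1 with h1 | h1
      · have hu' := (memX n1 n2 u).mp u.2
        have hv' := (memX n1 n2 v).mp v.2
        have hcase : ((u : ℕ × ℕ).2 = 1 ∧ (v : ℕ × ℕ).2 = n2) ∨
            ((u : ℕ × ℕ).2 = n2 ∧ (v : ℕ × ℕ).2 = 1) := by omega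
        rcases hcase with ⟨ha, hb⟩ | ⟨ha, hb⟩
        · have : f v11 = f vnn := (class_bot u ha).symm.trans (hfe.trans (class_top v hb))
          exact hne this.symm
        · have : f vnn = f v11 := (class_top u ha).symm.trans (hfe.trans (class_bot v hb))
          exact hne this
      · exact D_neq hf u v h1 hsne hfe
    · intro hs
      by_cases hcase1 : (u : ℕ × ℕ).2 = 1
      · rw [class_bot u hcase1, class_bot v (hs ▸ hcase1)]
      · by_cases hcase2 : (u : ℕ × ℕ).2 = n2
        · rw [class_top u hcase2, class_top v (hs ▸ hcase2)]
        · have hu' := (memX n1 n2 u).mp u.2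
          have hv' := (memX n1 n2 v).mp v.2
          have h1u : (u : ℕ × ℕ).1 = (u : ℕ × ℕ).2 := by omega
          have h1v : (v : ℕ × ℕ).1 = (v : ℕ × ℕ).2 := by omega
          have huv : u = v := Subtype.ext (Prod.ext_iff.mpr ⟨by omega, hs⟩)
          rw [huv]
  have hbnd : ∀ u : Xstar n1 n2, 1 ≤ (u : ℕ × ℕ).2 ∧ (u : ℕ × ℕ).2 ≤ n2 := by
    intro u; have := (memX n1 n2 u).mp u.2; omega
  have vert : ∀ i : Fin n2, ∃ u : Xstar n1 n2, (u : ℕ × ℕ).2 = i.val + 1 := by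
    intro i
    have hi := i.isLt
    by_cases hcc : i.val + 2 ≤ n2
    · exact ⟨⟨(i.val + 1, i.val + 1), by simp [Xstar]; omega⟩, rfl⟩
    · have hin : (i.val : ℕ) + 1 = n2 := by omega
      exact ⟨vnn, hin.symm⟩
  have hk : n2 = k := by
    have ginj : Function.Injective (fun i : Fin n2 => f (vert i).choose) := by
      intro i j hij
      have hij' := (main _ _).mp hij
      rw [(vert i).choose_spec, (vert j).choose_spec] at hij'
      exact Fin.ext (by omega)
    have gsurj : Function.Surjective (fun i : Fin n2 => f (vert i).choose) := by
      intro c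
      obtain ⟨u, hu⟩ := hf.1 c
      have hb := hbnd u
      have hlt2 : (u : ℕ × ℕ).2 - 1 < n2 := by omega
      refine ⟨⟨_, hlt2⟩, ?_⟩
      have hs := (vert ⟨_, hlt2⟩).choose_spec
      have h2' : ((vert ⟨(u : ℕ × ℕ).2 - 1, hlt2⟩).choose : ℕ × ℕ).2 = (u : ℕ × ℕ).2 := by
        rw [hs]; show (u : ℕ × ℕ).2 - 1 + 1 = (u : ℕ × ℕ).2; omega
      exact ((main _ _).mpr h2').trans hu
    have hcard := Fintype.card_of_bijective ⟨ginj, gsurj⟩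
    simpa using hcard
  exact ⟨hk.symm, main⟩
end
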